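/- arXiv:2406.17504 — 4 statements merged into one kernel-verified Lean document; each statement's English description precedes it below -/
import Mathlib

section
/- Let n ≥ 4 and let ℓ : Fin n ⊕ Fin n → {lines in ℝ³} be a map such that: for all i ≠ j, ℓ(inl i) ∩ ℓ(inl j) ≠ ∅ and ℓ(inr i) ∩ ℓ(inr j) ≠ ∅; for all i ≠ j, ℓ(inl i) ∩ ℓ(inr j) ≠ ∅; and for all i, ℓ(inl i) ∩ ℓ(inr i) = ∅. Then there is a plane in ℝ³ containing all the lines ℓ(v), v ∈ Fin n ⊕ Fin n. -/
/-!
Two distinct lines meet in at most one point, so a line meeting two lines of a plane `Q` at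
distinct points lies in `Q`. Pairwise meeting distinct lines are therefore either concurrent or
coplanar. This applies to the `aᵢ`, which are distinct since `aᵢ` meets `bⱼ` exactly when `i ≠ j`.

If the `aᵢ` pass through a common point `p`, then `p` is on no `bⱼ`; the plane through `b₀` and
`p` contains every `aᵢ` with `i ≠ 0`, hence every `bⱼ` (which meets two of them away from `p`),
hence `a₀` as well.

If the `aᵢ` lie in a plane `Q` and some `bⱼ` does not, then `bⱼ` meets `Q` in a single point `y`,
through which all `aᵢ`, `i ≠ j`, pass. For `i ≠ j` the line `bᵢ` avoids `y ∈ aᵢ`, so it meets two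
other `a`'s at distinct points and lies in `Q`; but then `bⱼ ∩ bᵢ = {y}`, a contradiction.
-/

/-- A line in ℝ³ is a one-dimensional affine subspace. -/
def IsLine3 (s : AffineSubspace ℝ (EuclideanSpace ℝ (Fin 3))) : Prop :=
  (s : Set (EuclideanSpace ℝ (Fin 3))).Nonempty ∧ Module.finrank ℝ s.direction = 1

/-- A plane in ℝ³ is a two-dimensional affine subspace. -/
def IsPlane3 (s : AffineSubspace ℝ (EuclideanSpace ℝ (Fin 3))) : Prop :=
  (s : Set (EuclideanSpace ℝ (Fin 3))).Nonempty ∧ Module.finrank ℝ s.direction = 2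

open Module Function

variable {k V P : Type*} [DivisionRing k] [AddCommGroup V] [Module k V] [AddTorsor V P]

namespace AffineSubspace

theorem nonempty_of_finrank_direction_pos {L : AffineSubspace k P}
    (h : 0 < finrank k L.direction) : (L : Set P).Nonempty := by
  rw [nonempty_iff_ne_bot]
  rintro rfl
  rw [direction_bot, finrank_bot] at h
  exact h.false

theorem le_affineSpan_insert (L : AffineSubspace k P) (p : P) :
    L ≤ affineSpan k (insert p (L : Set P)) :=
  fun _ hx => subset_affineSpan k _ (Set.mem_insert_of_mem p hx)

theorem finrank_direction_affineSpan_insert_of_notMem {L : AffineSubspace k P}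
    [FiniteDimensional k L.direction] (hL : (L : Set P).Nonempty) {p : P} (hp : p ∉ L) :
    finrank k (affineSpan k (insert p (L : Set P))).direction = finrank k L.direction + 1 := by
  have hlt : L < affineSpan k (insert p (L : Set P)) := by
    refine lt_of_le_of_ne (le_affineSpan_insert L p) fun h => hp ?_
    exact h ▸ mem_affineSpan k (Set.mem_insert p _)
  refine le_antisymm ?_ (Submodule.finrank_lt_finrank_of_lt (direction_lt_of_nonempty hlt hL))
  rw [direction_affineSpan]
  exact finrank_vectorSpan_insert_le L p

theorem exists_finrank_direction_eq_two_of_notMem {L : AffineSubspace k P}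
    (hL : finrank k L.direction = 1) {p : P} (hp : p ∉ L) :
    ∃ Q : AffineSubspace k P, finrank k Q.direction = 2 ∧ L ≤ Q ∧ p ∈ Q := by
  have : FiniteDimensional k L.direction := Module.finite_of_finrank_eq_succ hL
  refine ⟨affineSpan k (insert p (L : Set P)), ?_, le_affineSpan_insert L p,
    mem_affineSpan k (Set.mem_insert p _)⟩
  rw [finrank_direction_affineSpan_insert_of_notMem
    (nonempty_of_finrank_direction_pos (hL ▸ Nat.one_pos)) hp, hL]

theorem eq_affineSpan_pair_of_finrank_direction_eq_one {L : AffineSubspace k P}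
    (hL : finrank k L.direction = 1) {x y : P} (hx : x ∈ L) (hy : y ∈ L) (hxy : x ≠ y) :
    L = line[k, x, y] := by
  have : FiniteDimensional k (vectorSpan k (L : Set P)) := Module.finite_of_finrank_eq_succ hL
  have hcol : Collinear k (L : Set P) := collinear_iff_finrank_le_one.2 hL.le
  rw [hcol.affineSpan_eq_of_ne hx hy hxy, affineSpan_coe]

variable {L M Q : AffineSubspace k P}

theorem le_of_mem_of_mem_of_ne (hL : finrank k L.direction = 1) {x y : P} (hx : x ∈ L)
    (hy : y ∈ L) (hxy : x ≠ y) (hxQ : x ∈ Q) (hyQ : y ∈ Q) : L ≤ Q := by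
  rw [eq_affineSpan_pair_of_finrank_direction_eq_one hL hx hy hxy]
  exact affineSpan_pair_le_of_mem_of_mem hxQ hyQ

theorem inter_subsingleton_of_not_le (hL : finrank k L.direction = 1) (hLQ : ¬L ≤ Q) :
    ((L : Set P) ∩ Q).Subsingleton := fun _ hx _ hy =>
  by_contra fun hxy => hLQ (le_of_mem_of_mem_of_ne hL hx.1 hy.1 hxy hx.2 hy.2)

theorem inter_subsingleton_of_ne (hL : finrank k L.direction = 1)
    (hM : finrank k M.direction = 1) (hLM : L ≠ M) : ((L : Set P) ∩ M).Subsingleton :=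
  fun _ hx _ hy => by_contra fun hxy => hLM <|
    (eq_affineSpan_pair_of_finrank_direction_eq_one hL hx.1 hy.1 hxy).trans
      (eq_affineSpan_pair_of_finrank_direction_eq_one hM hx.2 hy.2 hxy).symm

theorem le_of_mem_of_inter_nonempty (hL : finrank k L.direction = 1) {p : P} (hpL : p ∈ L)
    (hpQ : p ∈ Q) (hMQ : M ≤ Q) (hpM : p ∉ M) (hLM : ((L : Set P) ∩ M).Nonempty) : L ≤ Q := by
  obtain ⟨x, hxL, hxM⟩ := hLM
  exact le_of_mem_of_mem_of_ne hL hpL hxL (ne_of_mem_of_not_mem hxM hpM).symm hpQ (hMQ hxM)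

theorem le_of_inter_nonempty_of_inter_nonempty {L₁ L₂ : AffineSubspace k P}
    (hM : finrank k M.direction = 1) (hL₁ : finrank k L₁.direction = 1)
    (hL₂ : finrank k L₂.direction = 1) (hL₁₂ : L₁ ≠ L₂) (hL₁Q : L₁ ≤ Q) (hL₂Q : L₂ ≤ Q)
    {y : P} (hy₁ : y ∈ L₁) (hy₂ : y ∈ L₂) (hyM : y ∉ M)
    (hL₁M : ((L₁ : Set P) ∩ M).Nonempty) (hL₂M : ((L₂ : Set P) ∩ M).Nonempty) : M ≤ Q := by
  obtain ⟨x, hx₁, hxM⟩ := hL₁M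
  have hx₂ : x ∉ L₂ := fun hx₂ =>
    hyM (inter_subsingleton_of_ne hL₁ hL₂ hL₁₂ ⟨hx₁, hx₂⟩ ⟨hy₁, hy₂⟩ ▸ hxM)
  exact le_of_mem_of_inter_nonempty hM hxM (hL₁Q hx₁) hL₂Q hx₂ (Set.inter_comm _ _ ▸ hL₂M)

end AffineSubspace

open AffineSubspace

theorem concurrent_or_coplanar_of_pairwise_meet {ι : Type*} [Nontrivial ι]
    {L : ι → AffineSubspace k P} (hL : ∀ i, finrank k (L i).direction = 1) (hinj : Injective L)
    (hmeet : Pairwise fun i j => ((L i : Set P) ∩ L j).Nonempty) :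
    (∃ p, ∀ i, p ∈ L i) ∨ ∃ Q : AffineSubspace k P, finrank k Q.direction = 2 ∧ ∀ i, L i ≤ Q := by
  refine or_iff_not_imp_left.2 fun hconc => ?_
  obtain ⟨i₀, i₁, h₀₁⟩ := exists_pair_ne ι
  obtain ⟨p, hp₀, hp₁⟩ := hmeet h₀₁
  obtain ⟨m, hpm⟩ := not_forall.1 (not_exists.1 hconc p)
  obtain ⟨Q, hQ, hmQ, hpQ⟩ := exists_finrank_direction_eq_two_of_notMem (hL m) hpm
  have hthrough : ∀ i, p ∈ L i → L i ≤ Q := fun i hpi =>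
    le_of_mem_of_inter_nonempty (hL i) hpi hpQ hmQ hpm (hmeet (by rintro rfl; exact hpm hpi))
  refine ⟨Q, hQ, fun i => ?_⟩
  by_cases hpi : p ∈ L i
  · exact hthrough i hpi
  · have hne : ∀ j, p ∈ L j → j ≠ i := by rintro j hpj rfl; exact hpi hpj
    exact le_of_inter_nonempty_of_inter_nonempty (hL i) (hL i₀) (hL i₁) (hinj.ne h₀₁)
      (hthrough i₀ hp₀) (hthrough i₁ hp₁) hp₀ hp₁ hpi (hmeet (hne i₀ hp₀)) (hmeet (hne i₁ hp₁))

theorem Fintype.exists_notMem_of_card_lt {ι : Type*} [Fintype ι] (s : Finset ι)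
    (h : s.card < Fintype.card ι) : ∃ i, i ∉ s := by
  simpa using Finset.exists_mem_notMem_of_card_lt_card (h.trans_eq Finset.card_univ.symm)

section MatchingComplement

variable {ι : Type*} {A B : ι → AffineSubspace k P}

theorem injective_of_meet_off_diagonal
    (hAB : ∀ i j, i ≠ j → ((A i : Set P) ∩ B j).Nonempty)
    (hdisj : ∀ i, Disjoint (A i : Set P) (B i)) : Injective A := by
  intro i j hij
  by_contra hne
  obtain ⟨x, hxA, hxB⟩ := hAB j i (Ne.symm hne)
  exact Set.disjoint_left.1 (hdisj i) (hij ▸ hxA) hxB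

variable [Fintype ι]

theorem exists_coplanar_of_concurrent (hι : 4 ≤ Fintype.card ι)
    (hA : ∀ i, finrank k (A i).direction = 1) (hB : ∀ j, finrank k (B j).direction = 1)
    (hAB : ∀ i j, i ≠ j → ((A i : Set P) ∩ B j).Nonempty)
    (hdisj : ∀ i, Disjoint (A i : Set P) (B i)) {p : P} (hp : ∀ i, p ∈ A i) :
    ∃ Q : AffineSubspace k P, finrank k Q.direction = 2 ∧ (∀ i, A i ≤ Q) ∧ ∀ j, B j ≤ Q := by
  classical
  have hAinj := injective_of_meet_off_diagonal hAB hdisj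
  have hpB : ∀ j, p ∉ B j := fun j => Set.disjoint_left.1 (hdisj j) (hp j)
  obtain ⟨e₀, e₁, h₀₁⟩ := Fintype.exists_pair_of_one_lt_card (by omega : 1 < Fintype.card ι)
  obtain ⟨Q, hQ, hB₀Q, hpQ⟩ := exists_finrank_direction_eq_two_of_notMem (hB e₀) (hpB e₀)
  have hAQ : ∀ i, i ≠ e₀ → A i ≤ Q := fun i hi =>
    le_of_mem_of_inter_nonempty (hA i) (hp i) hpQ hB₀Q (hpB e₀) (hAB i e₀ hi)
  have hBQ : ∀ j, B j ≤ Q := by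
    intro j
    rcases eq_or_ne j e₀ with rfl | hj
    · exact hB₀Q
    obtain ⟨i₁, hi₁⟩ := Fintype.exists_notMem_of_card_lt ({e₀, j} : Finset ι)
      (Finset.card_le_two.trans_lt (by omega))
    obtain ⟨i₂, hi₂⟩ := Fintype.exists_notMem_of_card_lt ({e₀, j, i₁} : Finset ι)
      (Finset.card_le_three.trans_lt (by omega))
    simp only [Finset.mem_insert, Finset.mem_singleton, not_or] at hi₁ hi₂
    exact le_of_inter_nonempty_of_inter_nonempty (hB j) (hA i₁) (hA i₂)
      (hAinj.ne (Ne.symm hi₂.2.2)) (hAQ i₁ hi₁.1) (hAQ i₂ hi₂.1) (hp i₁) (hp i₂) (hpB j)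
      (hAB i₁ j hi₁.2) (hAB i₂ j hi₂.2.1)
  refine ⟨Q, hQ, fun i => ?_, hBQ⟩
  rcases eq_or_ne i e₀ with rfl | hi
  · exact le_of_mem_of_inter_nonempty (hA i) (hp i) hpQ (hBQ e₁) (hpB e₁) (hAB i e₁ h₀₁)
  · exact hAQ i hi

theorem le_of_forall_le_of_meet_off_diagonal (hι : 4 ≤ Fintype.card ι)
    (hA : ∀ i, finrank k (A i).direction = 1) (hB : ∀ j, finrank k (B j).direction = 1)
    (hAB : ∀ i j, i ≠ j → ((A i : Set P) ∩ B j).Nonempty)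
    (hBB : ∀ i j, i ≠ j → ((B i : Set P) ∩ B j).Nonempty)
    (hdisj : ∀ i, Disjoint (A i : Set P) (B i)) {Q : AffineSubspace k P} (hAQ : ∀ i, A i ≤ Q)
    (j : ι) : B j ≤ Q := by
  classical
  have hAinj := injective_of_meet_off_diagonal hAB hdisj
  by_contra hBjQ
  have hsub := inter_subsingleton_of_not_le (hB j) hBjQ
  obtain ⟨i₁, hi₁⟩ := Fintype.exists_notMem_of_card_lt ({j} : Finset ι) (by simp; omega)
  obtain ⟨i₂, hi₂⟩ := Fintype.exists_notMem_of_card_lt ({j, i₁} : Finset ι)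
    (Finset.card_le_two.trans_lt (by omega))
  obtain ⟨i₃, hi₃⟩ := Fintype.exists_notMem_of_card_lt ({j, i₁, i₂} : Finset ι)
    (Finset.card_le_three.trans_lt (by omega))
  simp only [Finset.mem_insert, Finset.mem_singleton, not_or] at hi₁ hi₂ hi₃
  obtain ⟨y, hyA, hyB⟩ := hAB i₁ j hi₁
  have hyQ : y ∈ (B j : Set P) ∩ Q := ⟨hyB, hAQ i₁ hyA⟩
  have hyA_all : ∀ i, i ≠ j → y ∈ A i := fun i hi => by
    obtain ⟨z, hzA, hzB⟩ := hAB i j hi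
    rwa [hsub hyQ ⟨hzB, hAQ i hzA⟩]
  have hyB₁ : y ∉ B i₁ := Set.disjoint_left.1 (hdisj i₁) hyA
  have hB₁Q : B i₁ ≤ Q := le_of_inter_nonempty_of_inter_nonempty (hB i₁) (hA i₂) (hA i₃)
    (hAinj.ne (Ne.symm hi₃.2.2)) (hAQ i₂) (hAQ i₃) (hyA_all i₂ hi₂.1) (hyA_all i₃ hi₃.1) hyB₁
    (hAB i₂ i₁ hi₂.2) (hAB i₃ i₁ hi₃.2.1)
  obtain ⟨w, hwB, hwB₁⟩ := hBB j i₁ (Ne.symm hi₁)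
  exact hyB₁ (hsub ⟨hwB, hB₁Q hwB₁⟩ hyQ ▸ hwB₁)

end MatchingComplement

/-- In any line realization of the complete graph on `2n` vertices minus a perfect
matching (`n ≥ 4`), all the lines are coplanar. -/
theorem lines_of_Kn_minus_matching_coplanar
    (n : ℕ) (hn : 4 ≤ n)
    (ℓ : Fin n ⊕ Fin n → AffineSubspace ℝ (EuclideanSpace ℝ (Fin 3)))
    (hline : ∀ v, IsLine3 (ℓ v))
    (hAA : ∀ i j : Fin n, i ≠ j →
      ((ℓ (Sum.inl i) : Set (EuclideanSpace ℝ (Fin 3))) ∩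
        (ℓ (Sum.inl j) : Set (EuclideanSpace ℝ (Fin 3)))).Nonempty)
    (hBB : ∀ i j : Fin n, i ≠ j →
      ((ℓ (Sum.inr i) : Set (EuclideanSpace ℝ (Fin 3))) ∩
        (ℓ (Sum.inr j) : Set (EuclideanSpace ℝ (Fin 3)))).Nonempty)
    (hAB : ∀ i j : Fin n, i ≠ j →
      ((ℓ (Sum.inl i) : Set (EuclideanSpace ℝ (Fin 3))) ∩
        (ℓ (Sum.inr j) : Set (EuclideanSpace ℝ (Fin 3)))).Nonempty)
    (hMatch : ∀ i : Fin n,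
      (ℓ (Sum.inl i) : Set (EuclideanSpace ℝ (Fin 3))) ∩
        (ℓ (Sum.inr i) : Set (EuclideanSpace ℝ (Fin 3))) = ∅) :
    ∃ P : AffineSubspace ℝ (EuclideanSpace ℝ (Fin 3)),
      IsPlane3 P ∧ ∀ v : Fin n ⊕ Fin n, ℓ v ≤ P := by
  have hA : ∀ i, finrank ℝ (ℓ (Sum.inl i)).direction = 1 := fun i => (hline _).2
  have hB : ∀ j, finrank ℝ (ℓ (Sum.inr j)).direction = 1 := fun j => (hline _).2
  have hcard : 4 ≤ Fintype.card (Fin n) := by rwa [Fintype.card_fin]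
  have hdisj : ∀ i, Disjoint (ℓ (Sum.inl i) : Set (EuclideanSpace ℝ (Fin 3))) (ℓ (Sum.inr i)) :=
    fun i => Set.disjoint_iff_inter_eq_empty.2 (hMatch i)
  have hAinj := injective_of_meet_off_diagonal hAB hdisj
  have : Nontrivial (Fin n) := Fin.nontrivial_iff_two_le.2 (by omega)
  obtain ⟨Q, hQ, hAQ, hBQ⟩ : ∃ Q : AffineSubspace ℝ (EuclideanSpace ℝ (Fin 3)),
      finrank ℝ Q.direction = 2 ∧ (∀ i, ℓ (Sum.inl i) ≤ Q) ∧ ∀ j, ℓ (Sum.inr j) ≤ Q := by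
    rcases concurrent_or_coplanar_of_pairwise_meet hA hAinj hAA with ⟨p, hp⟩ | ⟨Q, hQ, hAQ⟩
    · exact exists_coplanar_of_concurrent hcard hA hB hAB hdisj hp
    · exact ⟨Q, hQ, hAQ, le_of_forall_le_of_meet_off_diagonal hcard hA hB hAB hBB hdisj hAQ⟩
  refine ⟨Q, ⟨nonempty_of_finrank_direction_pos (by omega), hQ⟩, ?_⟩
  rintro (i | j)
  exacts [hAQ i, hBQ j]
end

section
/- Let n ≥ 4 and let S be a finite family of subsets of Fin n such that every C ∈ S has at least 2 elements, every pair of distinct elements of Fin n is contained in exactly one member of S, and S has at least two members. Define a simple graph H on the vertex set V = (Fin n) ⊕ (Fin n) ⊕ {C // C ∈ S} with edges: (inl i)–(inl j) for i ≠ j; (inr i)–(inr j) for i ≠ j; (inl i)–(inr j) if and only if i ≠ j; (C)–(inl i) if and only if i ∈ C; and no other edges. Then the following are equivalent: (1) there exists a map ℓ from V to lines in ℝ³ such that two vertices v, w are adjacent in H if and only if ℓ(v) ∩ ℓ(w) ≠ ∅; (2) there exists an injective map f : Fin n → ℝ² such that for all pairwise distinct a, b, c ∈ Fin n, the points f(a),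 f(b), f(c) are collinear if and only if there exists C ∈ S with {a, b, c} ⊆ C. -/
/-- The vertex set of the graph `H`: two copies of `Fin n` (the cliques `A` and `B`)
together with one vertex for every member of `S`. -/
abbrev HVertex (n : ℕ) (S : Finset (Finset (Fin n))) : Type :=
  Fin n ⊕ Fin n ⊕ {C : Finset (Fin n) // C ∈ S}

/-- The adjacency relation of the graph `H`:
`(inl i)–(inl j)` and `(inr i)–(inr j)` for `i ≠ j`; `(inl i)–(inr j)` iff `i ≠ j`;
`C–(inl i)` iff `i ∈ C`; and no other edges. -/
def HAdj (n : ℕ) (S : Finset (Finset (Fin n))) :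
    HVertex n S → HVertex n S → Prop
  | Sum.inl i, Sum.inl j => i ≠ j
  | Sum.inl i, Sum.inr (Sum.inl j) => i ≠ j
  | Sum.inl i, Sum.inr (Sum.inr C) => i ∈ C.1
  | Sum.inr (Sum.inl i), Sum.inl j => i ≠ j
  | Sum.inr (Sum.inl i), Sum.inr (Sum.inl j) => i ≠ j
  | Sum.inr (Sum.inl _), Sum.inr (Sum.inr _) => False
  | Sum.inr (Sum.inr C), Sum.inl i => i ∈ C.1
  | Sum.inr (Sum.inr _), Sum.inr (Sum.inl _) => False
  | Sum.inr (Sum.inr _), Sum.inr (Sum.inr _) => False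

namespace HProof

noncomputable abbrev E3 := EuclideanSpace ℝ (Fin 3)

variable {V : Type*} [AddCommGroup V] [Module ℝ V]


/-- The line through `p` with direction `d`. -/
def lineSet (p d : V) : Set V := {x | ∃ t : ℝ, x = p + t • d}

/-- The plane through `z` spanned by `u, v`. -/
def planeSet (z u v : V) : Set V := {x | ∃ a b : ℝ, x = z + a • u + b • v}

lemma self_mem_lineSet (p d : V) : p ∈ lineSet p d := ⟨0, by simp⟩

lemma self_mem_planeSet (z u v : V) : z ∈ planeSet z u v := ⟨0, 0, by simp⟩

lemma lineSet_rebase {p d x : V} (hx : x ∈ lineSet p d) : lineSet p d = lineSet x d := by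
  obtain ⟨t0, rfl⟩ := hx
  ext y
  constructor
  · rintro ⟨t, rfl⟩; exact ⟨t - t0, by module⟩
  · rintro ⟨t, rfl⟩; exact ⟨t + t0, by module⟩

lemma lineSet_scale {p d : V} {c : ℝ} (hc : c ≠ 0) : lineSet p (c • d) = lineSet p d := by
  ext y
  constructor
  · rintro ⟨t, rfl⟩; exact ⟨t * c, by module⟩
  · rintro ⟨t, rfl⟩; exact ⟨t / c, by match_scalars <;> field_simp⟩

lemma lineSet_two_points {p d x y : V} (hx : x ∈ lineSet p d) (hy : y ∈ lineSet p d)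
    (hxy : x ≠ y) : lineSet p d = lineSet x (y - x) := by
  rw [lineSet_rebase hx] at hy ⊢
  obtain ⟨t, rfl⟩ := hy
  have ht : t ≠ 0 := by rintro rfl; simp at hxy
  have : x + t • d - x = t • d := by abel
  rw [this, lineSet_scale ht]

lemma lineSet_unique_meet {p d p' d' x y : V} (hne : lineSet p d ≠ lineSet p' d')
    (hx : x ∈ lineSet p d ∩ lineSet p' d') (hy : y ∈ lineSet p d ∩ lineSet p' d') : x = y := by
  by_contra hxy
  exact hne ((lineSet_two_points hx.1 hy.1 hxy).trans (lineSet_two_points hx.2 hy.2 hxy).symm)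

lemma lineSet_sub_planeSet {p d z u v : V} (hp : p ∈ planeSet z u v)
    (hd : ∃ a b : ℝ, d = a • u + b • v) : lineSet p d ⊆ planeSet z u v := by
  obtain ⟨a0, b0, rfl⟩ := hp
  obtain ⟨a, b, rfl⟩ := hd
  rintro x ⟨t, rfl⟩
  exact ⟨a0 + t * a, b0 + t * b, by module⟩

lemma planeSet_diff {z u v x y : V} (hx : x ∈ planeSet z u v) (hy : y ∈ planeSet z u v) :
    ∃ a b : ℝ, y - x = a • u + b • v := by
  obtain ⟨a1, b1, rfl⟩ := hx
  obtain ⟨a2, b2, rfl⟩ := hy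
  exact ⟨a2 - a1, b2 - b1, by module⟩

/-- A line with two distinct points in a plane is contained in the plane. -/
lemma lineSet_sub_of_two_mem {p d z u v x y : V} (hx1 : x ∈ lineSet p d) (hy1 : y ∈ lineSet p d)
    (hxy : x ≠ y) (hx2 : x ∈ planeSet z u v) (hy2 : y ∈ planeSet z u v) :
    lineSet p d ⊆ planeSet z u v := by
  rw [lineSet_two_points hx1 hy1 hxy]
  exact lineSet_sub_planeSet hx2 (planeSet_diff hx2 hy2)

/-- Two distinct intersecting lines have non-proportional directions. -/
lemma dir_not_smul {p d p' d' : V} (hne : lineSet p d ≠ lineSet p' d')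
    (hm : (lineSet p d ∩ lineSet p' d').Nonempty) (hd' : d' ≠ 0) (c : ℝ) : d' ≠ c • d := by
  rintro rfl
  obtain ⟨x, hx1, hx2⟩ := hm
  have hc : c ≠ 0 := by rintro rfl; simp at hd'
  rw [lineSet_rebase hx1, lineSet_rebase hx2, lineSet_scale hc] at hne
  exact hne rfl



/-- Cramer: two lines in a plane with non-proportional direction coordinates meet. -/
lemma lines_meet_of_det_ne {z u v : V} {α β a b α' β' a' b' : ℝ}
    (h : a * b' - b * a' ≠ 0) :
    (lineSet (z + α • u + β • v) (a • u + b • v) ∩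
      lineSet (z + α' • u + β' • v) (a' • u + b' • v)).Nonempty := by
  set D := a * b' - b * a' with hD
  refine ⟨z + α • u + β • v + (((α' - α) * b' - (β' - β) * a') / D) •
    (a • u + b • v), ⟨_, rfl⟩, ⟨((α' - α) * b - (β' - β) * a) / D, ?_⟩⟩
  match_scalars
  · ring
  · field_simp; ring
  · field_simp; ring

lemma exists_ratio {b0 b1 c0 c1 : ℝ} (h : b0 * c1 - c0 * b1 = 0) (hb : b0 ≠ 0 ∨ b1 ≠ 0) :
    ∃ r : ℝ, c0 = r * b0 ∧ c1 = r * b1 := by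
  rcases hb with hb | hb
  · exact ⟨c0 / b0, by field_simp, by field_simp; linear_combination h⟩
  · exact ⟨c1 / b1, by field_simp; linear_combination -h, by field_simp⟩

noncomputable abbrev E2 := EuclideanSpace ℝ (Fin 2)

def det2 (A B C : E2) : ℝ := (B 0 - A 0) * (C 1 - A 1) - (C 0 - A 0) * (B 1 - A 1)

lemma e2_ext {A B : E2} (h0 : A 0 = B 0) (h1 : A 1 = B 1) : A = B := by
  ext k; fin_cases k <;> assumption

lemma collinear_iff_det2 (A B C : E2) :
    Collinear ℝ ({A, B, C} : Set E2) ↔ det2 A B C = 0 := by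
  rw [collinear_iff_of_mem (Set.mem_insert A {B, C})]
  constructor
  · rintro ⟨w, hw⟩
    obtain ⟨rB, hB⟩ := hw B (by simp)
    obtain ⟨rC, hC⟩ := hw C (by simp)
    have hB0 : B 0 - A 0 = rB * w 0 := by rw [hB]; simp [vadd_eq_add]
    have hB1 : B 1 - A 1 = rB * w 1 := by rw [hB]; simp [vadd_eq_add]
    have hC0 : C 0 - A 0 = rC * w 0 := by rw [hC]; simp [vadd_eq_add]
    have hC1 : C 1 - A 1 = rC * w 1 := by rw [hC]; simp [vadd_eq_add]
    unfold det2
    rw [hB0, hB1, hC0, hC1]; ring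
  · intro h
    unfold det2 at h
    by_cases hBA : B = A
    · refine ⟨C - A, ?_⟩
      rintro p hp
      simp only [Set.mem_insert_iff, Set.mem_singleton_iff] at hp
      rcases hp with rfl | rfl | rfl
      · exact ⟨0, by simp⟩
      · exact ⟨0, by simp [hBA]⟩
      · exact ⟨1, by simp [vadd_eq_add]⟩
    · refine ⟨B - A, ?_⟩
      have hne : B 0 - A 0 ≠ 0 ∨ B 1 - A 1 ≠ 0 := by
        by_contra hc
        push_neg at hc
        exact hBA (e2_ext (by linarith [hc.1]) (by linarith [hc.2]))
      obtain ⟨r, hr0, hr1⟩ := exists_ratio h hne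
      rintro p hp
      simp only [Set.mem_insert_iff, Set.mem_singleton_iff] at hp
      rcases hp with rfl | rfl | rfl
      · exact ⟨0, by simp⟩
      · exact ⟨1, by simp [vadd_eq_add]⟩
      · refine ⟨r, e2_ext ?_ ?_⟩ <;>
          simp only [vadd_eq_add, PiLp.add_apply, PiLp.smul_apply, PiLp.sub_apply,
            smul_eq_mul] <;> linarith [hr0, hr1]

lemma coords_eq {o u v : V} (hind : ∀ a b : ℝ, a • u + b • v = 0 → a = 0 ∧ b = 0)
    {a b a' b' : ℝ} (h : o + a • u + b • v = o + a' • u + b' • v) : a = a' ∧ b = b' := by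
  have h2 : (a - a') • u + (b - b') • v = (o + a • u + b • v) - (o + a' • u + b' • v) := by
    module
  rw [h, sub_self] at h2
  obtain ⟨h3, h4⟩ := hind _ _ h2
  constructor <;> linarith

theorem duality' {n : ℕ} (L : Fin n → Set V) (o u v : V)
    (hind : ∀ a b : ℝ, a • u + b • v = 0 → a = 0 ∧ b = 0)
    (p d : Fin n → V) (α β γ δ : Fin n → ℝ)
    (hp : ∀ i, p i = o + α i • u + β i • v)
    (hd : ∀ i, d i = γ i • u + δ i • v)
    (hγ : ∀ i, γ i ≠ 0)
    (hL : ∀ i, L i = lineSet (p i) (d i))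
    (hdist : ∀ i j : Fin n, i ≠ j → L i ≠ L j)
    (hmeet : ∀ i j : Fin n, (L i ∩ L j).Nonempty) :
    ∃ f : Fin n → E2, Function.Injective f ∧
      ∀ a b c : Fin n, a ≠ b → a ≠ c → b ≠ c →
        (Collinear ℝ ({f a, f b, f c} : Set E2) ↔ ∃ z, z ∈ L a ∧ z ∈ L b ∧ z ∈ L c) := by
  classical
  obtain ⟨m, hm⟩ : ∃ m : Fin n → ℝ, ∀ i, γ i * m i = δ i :=
    ⟨fun i => δ i / γ i, fun i => mul_div_cancel₀ _ (hγ i)⟩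
  obtain ⟨cc, hcc⟩ : ∃ cc : Fin n → ℝ, ∀ i, cc i = β i - m i * α i := ⟨_, fun _ => rfl⟩
  -- slopes are distinct
  have mne : ∀ i j : Fin n, i ≠ j → m i ≠ m j := by
    intro i j hij hmm
    have hγi := hγ i; have hγj := hγ j
    have hdj : d j = (γ j / γ i) • d i := by
      rw [hd, hd]
      match_scalars
      · field_simp
      · rw [← hm i, ← hm j, hmm]; field_simp
    have hdj0 : d j ≠ 0 := by
      intro h0
      rw [hd] at h0
      exact hγj (hind _ _ h0).1
    exact dir_not_smul (p := p i) (d := d i) (p' := p j) (d' := d j)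
      (by rw [← hL, ← hL]; exact hdist i j hij)
      (by rw [← hL, ← hL]; exact hmeet i j) hdj0 (γ j / γ i) hdj
  -- membership via slope equation
  have memL : ∀ (i : Fin n) (X Y : ℝ), Y = m i * X + cc i →
      o + X • u + Y • v ∈ L i := by
    intro i X Y hY
    rw [hL]
    refine ⟨(X - α i) / γ i, ?_⟩
    rw [hp, hd, hY, hcc, ← hm i]
    match_scalars <;> field_simp [hγ i] <;> ring
  have memL' : ∀ (i : Fin n) (X Y : ℝ), o + X • u + Y • v ∈ L i →
      Y = m i * X + cc i := by
    intro i X Y hz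
    rw [hL] at hz
    obtain ⟨t, ht⟩ := hz
    rw [hp, hd] at ht
    have ht' : o + X • u + Y • v = o + (α i + t * γ i) • u + (β i + t * δ i) • v := by
      rw [ht]; module
    obtain ⟨h1, h2⟩ := coords_eq hind ht'
    rw [h2, h1, hcc, ← hm i]; ring
  refine ⟨fun i => WithLp.toLp 2 (fun k : Fin 2 => if k = 0 then m i else cc i : Fin 2 → ℝ),
    ?_, ?_⟩
  · intro i j hij
    by_contra hne
    have h0 : m i = m j := congrArg (fun x : E2 => x 0) hij
    exact mne i j hne h0
  · intro a b c hab hac hbc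
    rw [collinear_iff_det2]
    have hfd : det2 (WithLp.toLp 2 (fun k : Fin 2 => if k = 0 then m a else cc a))
        (WithLp.toLp 2 (fun k : Fin 2 => if k = 0 then m b else cc b))
        (WithLp.toLp 2 (fun k : Fin 2 => if k = 0 then m c else cc c))
        = (m b - m a) * (cc c - cc a) - (m c - m a) * (cc b - cc a) := by
      simp [det2]
    rw [hfd]
    constructor
    · intro hdet
      have hmab : m a - m b ≠ 0 := sub_ne_zero_of_ne (mne a b hab)
      set X : ℝ := (cc b - cc a) / (m a - m b) with hX
      set Y : ℝ := m a * X + cc a with hY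
      refine ⟨o + X • u + Y • v, memL a X Y hY, memL b X Y ?_, memL c X Y ?_⟩
      · rw [hY, hX]; field_simp; ring
      · rw [hY, hX]; field_simp; linear_combination hdet
    · rintro ⟨z, hza, hzb, hzc⟩
      have hz : ∃ X Y : ℝ, z = o + X • u + Y • v := by
        rw [hL] at hza
        obtain ⟨t, ht⟩ := hza
        rw [hp, hd] at ht
        exact ⟨α a + t * γ a, β a + t * δ a, by rw [ht]; module⟩
      obtain ⟨X, Y, rfl⟩ := hz
      have ha := memL' a X Y hza
      have hb := memL' b X Y hzb
      have hc := memL' c X Y hzc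
      linear_combination (m b - m a) * (ha - hc) - (m c - m a) * (ha - hb)

theorem duality {n : ℕ} (L : Fin n → Set V) (o u v : V)
    (hind : ∀ a b : ℝ, a • u + b • v = 0 → a = 0 ∧ b = 0)
    (hline : ∀ i, ∃ p d, d ≠ 0 ∧ L i = lineSet p d)
    (hsub : ∀ i, L i ⊆ planeSet o u v)
    (hdist : ∀ i j : Fin n, i ≠ j → L i ≠ L j)
    (hmeet : ∀ i j : Fin n, (L i ∩ L j).Nonempty) :
    ∃ f : Fin n → E2, Function.Injective f ∧
      ∀ a b c : Fin n, a ≠ b → a ≠ c → b ≠ c →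
        (Collinear ℝ ({f a, f b, f c} : Set E2) ↔ ∃ z, z ∈ L a ∧ z ∈ L b ∧ z ∈ L c) := by
  classical
  choose p d hd0 hL using hline
  have hpL : ∀ i, p i ∈ L i := fun i => (hL i).symm ▸ ⟨0, by module⟩
  have hpdL : ∀ i, p i + d i ∈ L i := fun i => (hL i).symm ▸ ⟨1, by module⟩
  choose α β hp using fun i => hsub i (hpL i)
  have hdiff : ∀ i, ∃ a b : ℝ, d i = a • u + b • v := by
    intro i
    obtain ⟨a, b, hab⟩ := planeSet_diff (hsub i (hpL i)) (hsub i (hpdL i))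
    exact ⟨a, b, by rw [← hab]; abel⟩
  choose γ δ hdd using hdiff
  -- shear so that all γ-coordinates are nonzero
  obtain ⟨c, hc⟩ := Finset.exists_notMem (Finset.univ.image fun i => γ i / δ i)
  have hγ' : ∀ i, γ i - c * δ i ≠ 0 := by
    intro i h0
    by_cases hδ : δ i = 0
    · rw [hδ, mul_zero, sub_zero] at h0
      apply hd0 i
      rw [hdd i, h0, hδ]; module
    · apply hc
      simp only [Finset.mem_image, Finset.mem_univ, true_and]
      exact ⟨i, by field_simp; linear_combination h0⟩
  have hind' : ∀ a b : ℝ, a • u + b • (v + c • u) = 0 → a = 0 ∧ b = 0 := by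
    intro a b h
    have h2 : (a + b * c) • u + b • v = 0 := by rw [← h]; module
    obtain ⟨h3, h4⟩ := hind _ _ h2
    exact ⟨by rw [h4] at h3; linarith, h4⟩
  refine duality' L o u (v + c • u) hind' p d (fun i => α i - c * β i) β
    (fun i => γ i - c * δ i) δ ?_ ?_ hγ' hL hdist hmeet
  · intro i; rw [hp i]; module
  · intro i; rw [hdd i]; module

/-- No flat contains everything. -/
lemma comb_not_univ {n : ℕ} {S : Finset (Finset (Fin n))}
    (hcard : ∀ C ∈ S, 2 ≤ C.card)
    (hpair : ∀ i j : Fin n, i ≠ j → ∃! C : Finset (Fin n), C ∈ S ∧ i ∈ C ∧ j ∈ C)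
    (hS : 2 ≤ S.card) : ∀ C ∈ S, ∃ x, x ∉ C := by
  intro C hC
  by_contra h
  push_neg at h
  have hsub : S ⊆ {C} := by
    intro C' hC'
    obtain ⟨a, ha, b, hb, hab⟩ := Finset.one_lt_card.1 (hcard C' hC')
    obtain ⟨D, -, huniq⟩ := hpair a b hab
    rw [Finset.mem_singleton,
      huniq C' ⟨hC', ha, hb⟩, huniq C ⟨hC, h a, h b⟩]
  have := Finset.card_le_card hsub
  simp at this
  omega

/-- For distinct `i j` there is a flat containing `i` but not `j`. -/
lemma comb_sep {n : ℕ} {S : Finset (Finset (Fin n))}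
    (hcard : ∀ C ∈ S, 2 ≤ C.card)
    (hpair : ∀ i j : Fin n, i ≠ j → ∃! C : Finset (Fin n), C ∈ S ∧ i ∈ C ∧ j ∈ C)
    (hS : 2 ≤ S.card) : ∀ i j : Fin n, i ≠ j → ∃ C ∈ S, i ∈ C ∧ j ∉ C := by
  intro i j hij
  obtain ⟨Cij, ⟨hCijS, hiij, hjij⟩, huniq⟩ := hpair i j hij
  obtain ⟨k, hk⟩ := comb_not_univ hcard hpair hS Cij hCijS
  have hik : i ≠ k := fun h => hk (h ▸ hiij)
  obtain ⟨Cik, ⟨hCikS, hiik, hkik⟩, -⟩ := hpair i k hik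
  refine ⟨Cik, hCikS, hiik, fun hjCik => ?_⟩
  exact hk ((huniq Cik ⟨hCikS, hiik, hjCik⟩) ▸ hkik)

/-- Case I: a near-pencil is always realizable. -/
theorem caseI {n : ℕ} {S : Finset (Finset (Fin n))}
    (hpair : ∀ i j : Fin n, i ≠ j → ∃! C : Finset (Fin n), C ∈ S ∧ i ∈ C ∧ j ∈ C)
    (j : Fin n) (C₀ : Finset (Fin n)) (hC₀S : C₀ ∈ S) (hj : j ∉ C₀)
    (hbig : ∀ x : Fin n, x ≠ j → x ∈ C₀) :
    ∃ f : Fin n → E2, Function.Injective f ∧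
      ∀ a b c : Fin n, a ≠ b → a ≠ c → b ≠ c →
        (Collinear ℝ ({f a, f b, f c} : Set E2) ↔ ∃ C ∈ S, a ∈ C ∧ b ∈ C ∧ c ∈ C) := by
  classical
  set fx : Fin n → ℝ := fun x => if x = j then 0 else (x : ℕ) with hfx
  set fy : Fin n → ℝ := fun x => if x = j then 1 else 0 with hfy
  refine ⟨fun x => WithLp.toLp 2 (fun k : Fin 2 => if k = 0 then fx x else fy x : Fin 2 → ℝ), ?_, ?_⟩
  · intro x y hxy
    have h0 : fx x = fx y := congrArg (fun v : E2 => v 0) hxy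
    have h1 : fy x = fy y := congrArg (fun v : E2 => v 1) hxy
    simp only [hfx, hfy] at h0 h1
    by_cases hx : x = j
    · by_cases hy : y = j
      · exact hx.trans hy.symm
      · rw [if_pos hx, if_neg hy] at h1; norm_num at h1
    · by_cases hy : y = j
      · rw [if_neg hx, if_pos hy] at h1; norm_num at h1
      · rw [if_neg hx, if_neg hy] at h0
        exact Fin.val_injective (Nat.cast_injective h0)
  · intro a b c hab hac hbc
    have hdet : det2 (WithLp.toLp 2 (fun k : Fin 2 => if k = 0 then fx a else fy a))
        (WithLp.toLp 2 (fun k : Fin 2 => if k = 0 then fx b else fy b))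
        (WithLp.toLp 2 (fun k : Fin 2 => if k = 0 then fx c else fy c))
        = (fx b - fx a) * (fy c - fy a) - (fx c - fx a) * (fy b - fy a) := by
      simp [det2]
    rw [collinear_iff_det2, hdet]
    have helper : ∀ C ∈ S, j ∈ C → ∀ y z : Fin n, y ≠ z → y ≠ j → z ≠ j →
        y ∈ C → z ∈ C → False := by
      intro C hCS hjC y z hyz hyj hzj hyC hzC
      obtain ⟨D, -, huniq⟩ := hpair y z hyz
      have h1 : C = D := (huniq C ⟨hCS, hyC, hzC⟩)
      have h2 : C₀ = D := (huniq C₀ ⟨hC₀S, hbig y hyj, hbig z hzj⟩)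
      exact hj (h1.trans h2.symm ▸ hjC)
    have hvalne : ∀ y z : Fin n, y ≠ z → ((y : ℕ) : ℝ) ≠ ((z : ℕ) : ℝ) := by
      intro y z hyz h
      exact hyz (Fin.val_injective (Nat.cast_injective h))
    by_cases ha : a = j
    · have hbj : b ≠ j := fun h => hab (ha.trans h.symm)
      have hcj : c ≠ j := fun h => hac (ha.trans h.symm)
      constructor
      · intro h
        simp only [hfx, hfy, if_pos ha, if_neg hbj, if_neg hcj] at h
        exact absurd (by linarith : ((b : ℕ) : ℝ) = ((c : ℕ) : ℝ)) (hvalne b c hbc)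
      · rintro ⟨C, hCS, haC, hbC, hcC⟩
        exact absurd (helper C hCS (ha ▸ haC) b c hbc hbj hcj hbC hcC) (by simp)
    · by_cases hb : b = j
      · have hcj : c ≠ j := fun h => hbc (hb.trans h.symm)
        constructor
        · intro h
          simp only [hfx, hfy, if_pos hb, if_neg ha, if_neg hcj] at h
          exact absurd (by linarith : ((a : ℕ) : ℝ) = ((c : ℕ) : ℝ)) (hvalne a c hac)
        · rintro ⟨C, hCS, haC, hbC, hcC⟩
          exact absurd (helper C hCS (hb ▸ hbC) a c hac ha hcj haC hcC) (by simp)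
      · by_cases hc : c = j
        · constructor
          · intro h
            simp only [hfx, hfy, if_pos hc, if_neg ha, if_neg hb] at h
            exact absurd (by linarith : ((a : ℕ) : ℝ) = ((b : ℕ) : ℝ)) (hvalne a b hab)
          · rintro ⟨C, hCS, haC, hbC, hcC⟩
            exact absurd (helper C hCS (hc ▸ hcC) a b hab ha hb haC hbC) (by simp)
        · constructor
          · intro _
            exact ⟨C₀, hC₀S, hbig a ha, hbig b hb, hbig c hc⟩
          · intro _
            simp [hfx, hfy, if_neg ha, if_neg hb, if_neg hc]

lemma isLine3_param {s : AffineSubspace ℝ E3} (h : IsLine3 s) :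
    ∃ p d : E3, d ≠ 0 ∧ (s : Set E3) = lineSet p d := by
  obtain ⟨⟨p, hp⟩, hdim⟩ := h
  obtain ⟨⟨d, hdmem⟩, hd0, hspan⟩ := finrank_eq_one_iff'.1 hdim
  refine ⟨p, d, fun h0 => hd0 (Subtype.ext h0), ?_⟩
  ext x
  constructor
  · intro hx
    have hv : x -ᵥ p ∈ s.direction := AffineSubspace.vsub_mem_direction hx hp
    obtain ⟨c, hc⟩ := hspan ⟨x -ᵥ p, hv⟩
    have hc' : c • d = x - p := congrArg Subtype.val hc
    exact ⟨c, by rw [hc']; abel⟩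
  · rintro ⟨t, rfl⟩
    have : t • d ∈ s.direction := s.direction.smul_mem t hdmem
    have h2 := AffineSubspace.vadd_mem_of_mem_direction this hp
    have h3 : t • d +ᵥ p = p + t • d := by
      rw [vadd_eq_add]; abel
    rwa [h3] at h2

/-- Solve a linear relation for `v`. -/
lemma solve_smul {u w : V} {a b : ℝ} (hb : b ≠ 0) (h : a • u + b • w = 0) :
    w = (b⁻¹ * (-a)) • u := by
  have h2 : b • w = (-a) • u := by
    rw [neg_smul, ← sub_eq_zero, sub_neg_eq_add, add_comm]
    exact h
  rw [← smul_smul, ← h2, smul_smul, inv_mul_cancel₀ hb, one_smul]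

lemma indep_of_not_smul {d d' : V} (hd : d ≠ 0) (h : ∀ c : ℝ, d' ≠ c • d) :
    ∀ a b : ℝ, a • d + b • d' = 0 → a = 0 ∧ b = 0 := by
  intro a b hab
  by_cases hb : b = 0
  · subst hb
    refine ⟨?_, rfl⟩
    have h2 : a • d = 0 := by rw [← hab]; module
    rcases smul_eq_zero.1 h2 with h3 | h3
    · exact h3
    · exact absurd h3 hd
  · exact absurd (solve_smul hb hab) (h _)

theorem caseII {n : ℕ} (hn : 4 ≤ n)
    {S : Finset (Finset (Fin n))}
    (hcard : ∀ C ∈ S, 2 ≤ C.card)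
    (hpair : ∀ i j : Fin n, i ≠ j → ∃! C : Finset (Fin n), C ∈ S ∧ i ∈ C ∧ j ∈ C)
    (hS : 2 ≤ S.card)
    (hsmall : ∀ C : {C : Finset (Fin n) // C ∈ S}, ∃ i i' : Fin n, i ≠ i' ∧ i ∉ C.1 ∧ i' ∉ C.1)
    (LA LB : Fin n → Set V) (LC : {C : Finset (Fin n) // C ∈ S} → Set V)
    (hlineA : ∀ i, ∃ p d, d ≠ 0 ∧ LA i = lineSet p d)
    (hlineB : ∀ i, ∃ p d, d ≠ 0 ∧ LB i = lineSet p d)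
    (hlineC : ∀ C, ∃ p d, d ≠ 0 ∧ LC C = lineSet p d)
    (hAA : ∀ i j : Fin n, i ≠ j → (LA i ∩ LA j).Nonempty)
    (hAB : ∀ i j : Fin n, i ≠ j → (LA i ∩ LB j).Nonempty)
    (hABd : ∀ i : Fin n, LA i ∩ LB i = ∅)
    (hAC : ∀ (i : Fin n) (C : {C : Finset (Fin n) // C ∈ S}), i ∈ C.1 → (LA i ∩ LC C).Nonempty)
    (hACd : ∀ (i : Fin n) (C : {C : Finset (Fin n) // C ∈ S}), i ∉ C.1 → LA i ∩ LC C = ∅) :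
    ∃ f : Fin n → E2, Function.Injective f ∧
      ∀ a b c : Fin n, a ≠ b → a ≠ c → b ≠ c →
        (Collinear ℝ ({f a, f b, f c} : Set E2) ↔ ∃ C ∈ S, a ∈ C ∧ b ∈ C ∧ c ∈ C) := by
  classical
  choose pA dA hdA hLA using hlineA
  choose pB dB hdB hLB using hlineB
  choose pC dC hdC hLC using hlineC
  have hselfA : ∀ i, pA i ∈ LA i := fun i => (hLA i).symm ▸ self_mem_lineSet (pA i) (dA i)
  have hdistA : ∀ i j : Fin n, i ≠ j → LA i ≠ LA j := by
    intro i j hij heq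
    obtain ⟨C, hCS, hiC, hjC⟩ := comb_sep hcard hpair hS i j hij
    have h1 := hAC i ⟨C, hCS⟩ hiC
    rw [heq, hACd j ⟨C, hCS⟩ hjC] at h1
    exact Set.not_nonempty_empty h1
  have huniqA : ∀ i j : Fin n, i ≠ j → ∀ x y : V,
      x ∈ LA i → x ∈ LA j → y ∈ LA i → y ∈ LA j → x = y := by
    intro i j hij x y hx1 hx2 hy1 hy2
    rw [hLA i] at hx1 hy1
    rw [hLA j] at hx2 hy2
    exact lineSet_unique_meet (fun h => hdistA i j hij (by rw [hLA i, hLA j, h]))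
      ⟨hx1, hx2⟩ ⟨hy1, hy2⟩
  -- the four indices
  set i0 : Fin n := ⟨0, by omega⟩ with hi0
  set i1 : Fin n := ⟨1, by omega⟩ with hi1
  set i2 : Fin n := ⟨2, by omega⟩ with hi2
  set i3 : Fin n := ⟨3, by omega⟩ with hi3
  have h01 : i0 ≠ i1 := Fin.ne_of_val_ne (by norm_num)
  have h02 : i0 ≠ i2 := Fin.ne_of_val_ne (by norm_num)
  have h12 : i1 ≠ i2 := Fin.ne_of_val_ne (by norm_num)
  have h23 : i2 ≠ i3 := Fin.ne_of_val_ne (by norm_num)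
  have h13 : i1 ≠ i3 := Fin.ne_of_val_ne (by norm_num)
  have h30 : i3 ≠ i0 := Fin.ne_of_val_ne (by norm_num)
  -- Stage 1: all the A-lines lie in a common plane
  have hplane : ∃ o u v : V, (∀ a b : ℝ, a • u + b • v = 0 → a = 0 ∧ b = 0) ∧
      ∀ k, LA k ⊆ planeSet o u v := by
    obtain ⟨x, hx0, hx1⟩ := hAA i0 i1 h01
    have hLA0x : LA i0 = lineSet x (dA i0) := by
      rw [hLA i0]; exact lineSet_rebase (by rw [← hLA i0]; exact hx0)
    have hLA1x : LA i1 = lineSet x (dA i1) := by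
      rw [hLA i1]; exact lineSet_rebase (by rw [← hLA i1]; exact hx1)
    have hns : ∀ c : ℝ, dA i1 ≠ c • dA i0 := by
      apply dir_not_smul (p := x) (p' := x)
      · rw [← hLA0x, ← hLA1x]; exact hdistA i0 i1 h01
      · exact ⟨x, self_mem_lineSet _ _, self_mem_lineSet _ _⟩
      · exact hdA i1
    have hind01 := indep_of_not_smul (hdA i0) hns
    have hsub0 : LA i0 ⊆ planeSet x (dA i0) (dA i1) := by
      rw [hLA0x]
      exact lineSet_sub_planeSet (self_mem_planeSet _ _ _) ⟨1, 0, by module⟩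
    have hsub1 : LA i1 ⊆ planeSet x (dA i0) (dA i1) := by
      rw [hLA1x]
      exact lineSet_sub_planeSet (self_mem_planeSet _ _ _) ⟨0, 1, by module⟩
    have dich : ∀ k, x ∈ LA k ∨ LA k ⊆ planeSet x (dA i0) (dA i1) := by
      intro k
      by_cases hk0 : k = i0
      · subst hk0; right; exact hsub0
      by_cases hk1 : k = i1
      · subst hk1; right; exact hsub1
      obtain ⟨y0, hy0k, hy00⟩ := hAA k i0 hk0
      obtain ⟨y1, hy1k, hy11⟩ := hAA k i1 hk1
      by_cases hyy : y0 = y1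
      · left
        have : y0 = x := huniqA i0 i1 h01 y0 x hy00 (hyy ▸ hy11) hx0 hx1
        rwa [← this]
      · right
        rw [hLA k]
        exact lineSet_sub_of_two_mem (by rw [← hLA k]; exact hy0k)
          (by rw [← hLA k]; exact hy1k) hyy (hsub0 hy00) (hsub1 hy11)
    by_cases hconc : ∀ k, x ∈ LA k
    · -- concurrent case: build the plane from a transversal B-line
      have xnotB : ∀ j, x ∉ LB j := by
        intro j hxB
        have : x ∈ LA j ∩ LB j := ⟨hconc j, hxB⟩
        rw [hABd j] at this
        exact this
      obtain ⟨y1, hy1A, hy1B⟩ := hAB i1 i0 (Ne.symm h01)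
      obtain ⟨y2, hy2A, hy2B⟩ := hAB i2 i0 (Ne.symm h02)
      have hy1x : y1 ≠ x := fun h => xnotB i0 (h ▸ hy1B)
      have hy2x : y2 ≠ x := fun h => xnotB i0 (h ▸ hy2B)
      have hy12 : y1 ≠ y2 := by
        intro h
        exact hy1x (huniqA i1 i2 h12 y1 x hy1A (h ▸ hy2A) (hconc i1) (hconc i2))
      have hLA1' : LA i1 = lineSet x (y1 - x) := by
        rw [hLA i1]
        exact lineSet_two_points (by rw [← hLA i1]; exact hconc i1)
          (by rw [← hLA i1]; exact hy1A) (Ne.symm hy1x)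
      refine ⟨x, y1 - x, y2 - y1, ?_, ?_⟩
      · -- independence
        intro a b hab
        by_cases hb : b = 0
        · subst hb
          refine ⟨?_, rfl⟩
          have h2 : a • (y1 - x) = 0 := by rw [← hab]; module
          rcases smul_eq_zero.1 h2 with h3 | h3
          · exact h3
          · exact absurd (sub_eq_zero.1 h3) hy1x
        · exfalso
          have hv := solve_smul hb hab
          have hy2mem : y2 ∈ lineSet x (y1 - x) := by
            refine ⟨1 + b⁻¹ * (-a), ?_⟩
            have : y2 = y1 + (y2 - y1) := by abel
            rw [this, hv]
            module
          rw [← hLA1'] at hy2mem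
          exact hy2x (huniqA i1 i2 h12 y2 x hy2mem hy2A (hconc i1) (hconc i2))
      · -- all A-lines in the plane Q
        have hxQ : x ∈ planeSet x (y1 - x) (y2 - y1) := self_mem_planeSet _ _ _
        have hy1Q : y1 ∈ planeSet x (y1 - x) (y2 - y1) := ⟨1, 0, by module⟩
        have hy2Q : y2 ∈ planeSet x (y1 - x) (y2 - y1) := ⟨1, 1, by module⟩
        have hBQ : LB i0 ⊆ planeSet x (y1 - x) (y2 - y1) := by
          rw [hLB i0]
          exact lineSet_sub_of_two_mem (by rw [← hLB i0]; exact hy1B)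
            (by rw [← hLB i0]; exact hy2B) hy12 hy1Q hy2Q
        have hAQ' : ∀ k, k ≠ i0 → LA k ⊆ planeSet x (y1 - x) (y2 - y1) := by
          intro k hk0
          obtain ⟨yk, hykA, hykB⟩ := hAB k i0 hk0
          have hykx : yk ≠ x := fun h => xnotB i0 (h ▸ hykB)
          have : LA k = lineSet x (yk - x) := by
            rw [hLA k]
            exact lineSet_two_points (by rw [← hLA k]; exact hconc k)
              (by rw [← hLA k]; exact hykA) (Ne.symm hykx)
          rw [this]
          exact lineSet_sub_planeSet hxQ (planeSet_diff hxQ (hBQ hykB))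
        intro k
        by_cases hk0 : k = i0
        · subst hk0
          obtain ⟨z2, hz2A, hz2B⟩ := hAB i2 i1 (Ne.symm h12)
          obtain ⟨z3, hz3A, hz3B⟩ := hAB i3 i1 (Ne.symm h13)
          have hz2x : z2 ≠ x := fun h => xnotB i1 (h ▸ hz2B)
          have hz23 : z2 ≠ z3 := by
            intro h
            exact hz2x (huniqA i2 i3 h23 z2 x hz2A (h ▸ hz3A) (hconc i2) (hconc i3))
          have hB1Q : LB i1 ⊆ planeSet x (y1 - x) (y2 - y1) := by
            rw [hLB i1]
            exact lineSet_sub_of_two_mem (by rw [← hLB i1]; exact hz2B)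
              (by rw [← hLB i1]; exact hz3B) hz23
              (hAQ' i2 (Ne.symm h02) hz2A) (hAQ' i3 h30 hz3A)
          obtain ⟨y0, hy0A, hy0B⟩ := hAB i0 i1 h01
          have hy0x : y0 ≠ x := fun h => xnotB i1 (h ▸ hy0B)
          have : LA i0 = lineSet x (y0 - x) := by
            rw [hLA i0]
            exact lineSet_two_points (by rw [← hLA i0]; exact hconc i0)
              (by rw [← hLA i0]; exact hy0A) (Ne.symm hy0x)
          rw [this]
          exact lineSet_sub_planeSet hxQ (planeSet_diff hxQ (hB1Q hy0B))
        · exact hAQ' k hk0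
    · push_neg at hconc
      obtain ⟨k, hk⟩ := hconc
      have hsubk : LA k ⊆ planeSet x (dA i0) (dA i1) := (dich k).resolve_left hk
      refine ⟨x, dA i0, dA i1, hind01, ?_⟩
      intro m
      rcases dich m with hxm | hsub
      · by_cases hmk : m = k
        · exact absurd (hmk ▸ hxm) hk
        · obtain ⟨y, hym, hyk⟩ := hAA m k hmk
          have hxy : x ≠ y := fun h => hk (h ▸ hyk)
          have : LA m = lineSet x (y - x) := by
            rw [hLA m]
            exact lineSet_two_points (by rw [← hLA m]; exact hxm)
              (by rw [← hLA m]; exact hym) hxy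
          rw [this]
          exact lineSet_sub_planeSet (self_mem_planeSet _ _ _)
            (planeSet_diff (self_mem_planeSet _ _ _) (hsubk hyk))
      · exact hsub
  obtain ⟨o, u, v, hind, hsub⟩ := hplane
  -- coordinates of a line contained in the plane
  have getco : ∀ p d : V, lineSet p d ⊆ planeSet o u v →
      ∃ a b g e : ℝ, p = o + a • u + b • v ∧ d = g • u + e • v := by
    intro p d hsubL
    obtain ⟨a, b, hab⟩ := hsubL (self_mem_lineSet p d)
    obtain ⟨g, e, hge⟩ := planeSet_diff (hsubL (self_mem_lineSet p d))
      (hsubL (show p + d ∈ lineSet p d from ⟨1, by module⟩))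
    have hd' : p + d - p = d := by abel
    rw [hd'] at hge
    exact ⟨a, b, g, e, hab, hge⟩
  -- no C-line is contained in the plane
  have hCnot : ∀ C : {C : Finset (Fin n) // C ∈ S}, ¬ LC C ⊆ planeSet o u v := by
    intro C hsubC
    obtain ⟨i, i', hii', hiC, hi'C⟩ := hsmall C
    rw [hLC C] at hsubC
    obtain ⟨aC, bC, gC, eC, hpCo, hdCo⟩ := getco _ _ hsubC
    have hsubi : lineSet (pA i) (dA i) ⊆ planeSet o u v := by rw [← hLA i]; exact hsub i
    have hsubi' : lineSet (pA i') (dA i') ⊆ planeSet o u v := by rw [← hLA i']; exact hsub i'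
    obtain ⟨a1, b1, g1, e1, hp1, hd1⟩ := getco _ _ hsubi
    obtain ⟨a2, b2, g2, e2, hp2, hd2⟩ := getco _ _ hsubi'
    have hgeC : gC ≠ 0 ∨ eC ≠ 0 := by
      by_contra hcon
      push_neg at hcon
      apply hdC C
      rw [hdCo, hcon.1, hcon.2]
      module
    have r1 : g1 * eC - e1 * gC = 0 := by
      by_contra hne
      have hmeet := lines_meet_of_det_ne (z := o) (u := u) (v := v) (α := a1) (β := b1)
        (α' := aC) (β' := bC) hne
      rw [← hp1, ← hd1, ← hpCo, ← hdCo, ← hLA i, ← hLC C] at hmeet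
      rw [hACd i C hiC] at hmeet
      exact Set.not_nonempty_empty hmeet
    have r2 : g2 * eC - e2 * gC = 0 := by
      by_contra hne
      have hmeet := lines_meet_of_det_ne (z := o) (u := u) (v := v) (α := a2) (β := b2)
        (α' := aC) (β' := bC) hne
      rw [← hp2, ← hd2, ← hpCo, ← hdCo, ← hLA i', ← hLC C] at hmeet
      rw [hACd i' C hi'C] at hmeet
      exact Set.not_nonempty_empty hmeet
    obtain ⟨r, hr0, hr1⟩ := exists_ratio (by linarith : gC * e1 - g1 * eC = 0) hgeC
    obtain ⟨r', hr0', hr1'⟩ := exists_ratio (by linarith : gC * e2 - g2 * eC = 0) hgeC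
    have hrne : r ≠ 0 := by
      intro h
      apply hdA i
      rw [hd1, hr0, hr1, h]
      module
    have hr'ne : r' ≠ 0 := by
      intro h
      apply hdA i'
      rw [hd2, hr0', hr1', h]
      module
    have hdd : dA i' = (r' / r) • dA i := by
      rw [hd1, hd2, hr0, hr1, hr0', hr1']
      match_scalars <;> field_simp <;> ring
    obtain ⟨z, hz1, hz2⟩ := hAA i i' hii'
    apply hdistA i i' hii'
    have e1 : lineSet (pA i) (dA i) = lineSet z (dA i) :=
      lineSet_rebase (by rw [← hLA i]; exact hz1)
    have e2 : lineSet (pA i') (dA i') = lineSet z (dA i') :=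
      lineSet_rebase (by rw [← hLA i']; exact hz2)
    rw [hLA i, hLA i', e1, e2, hdd, lineSet_scale (div_ne_zero hr'ne hrne)]
  -- two points of a C-line in the plane coincide
  have hCuniq : ∀ (C : {C : Finset (Fin n) // C ∈ S}) (x y : V), x ∈ LC C → y ∈ LC C →
      x ∈ planeSet o u v → y ∈ planeSet o u v → x = y := by
    intro C x y h1 h2 h3 h4
    by_contra hxy
    apply hCnot C
    rw [hLC C]
    exact lineSet_sub_of_two_mem (by rw [← hLC C]; exact h1)
      (by rw [← hLC C]; exact h2) hxy h3 h4
  -- concurrency is equivalent to flats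
  have concur_iff : ∀ a b c : Fin n, a ≠ b → a ≠ c → b ≠ c →
      ((∃ z, z ∈ LA a ∧ z ∈ LA b ∧ z ∈ LA c) ↔ ∃ C ∈ S, a ∈ C ∧ b ∈ C ∧ c ∈ C) := by
    intro a b c hab hac hbc
    constructor
    · rintro ⟨z, hza, hzb, hzc⟩
      obtain ⟨C, ⟨hCS, haC, hbC⟩, -⟩ := hpair a b hab
      obtain ⟨wa, hwaA, hwaC⟩ := hAC a ⟨C, hCS⟩ haC
      obtain ⟨wb, hwbA, hwbC⟩ := hAC b ⟨C, hCS⟩ hbC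
      have hwab : wa = wb := hCuniq ⟨C, hCS⟩ wa wb hwaC hwbC (hsub a hwaA) (hsub b hwbA)
      have hwz : wa = z := huniqA a b hab wa z hwaA (hwab ▸ hwbA) hza hzb
      have hzC : z ∈ LC ⟨C, hCS⟩ := hwz ▸ hwaC
      have hcC : c ∈ C := by
        by_contra hcC
        have := hACd c ⟨C, hCS⟩ hcC
        have h2 : z ∈ LA c ∩ LC ⟨C, hCS⟩ := ⟨hzc, hzC⟩
        rw [this] at h2
        exact h2
      exact ⟨C, hCS, haC, hbC, hcC⟩
    · rintro ⟨C, hCS, haC, hbC, hcC⟩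
      obtain ⟨wa, hwaA, hwaC⟩ := hAC a ⟨C, hCS⟩ haC
      obtain ⟨wb, hwbA, hwbC⟩ := hAC b ⟨C, hCS⟩ hbC
      obtain ⟨wc, hwcA, hwcC⟩ := hAC c ⟨C, hCS⟩ hcC
      have hwab : wa = wb := hCuniq ⟨C, hCS⟩ wa wb hwaC hwbC (hsub a hwaA) (hsub b hwbA)
      have hwac : wa = wc := hCuniq ⟨C, hCS⟩ wa wc hwaC hwcC (hsub a hwaA) (hsub c hwcA)
      exact ⟨wa, hwaA, hwab ▸ hwbA, hwac ▸ hwcA⟩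
  -- apply duality
  obtain ⟨f, hf, hiff⟩ := duality LA o u v hind (fun i => ⟨pA i, dA i, hdA i, hLA i⟩)
    hsub hdistA (fun i j => by
      by_cases hij : i = j
      · exact ⟨pA i, hselfA i, hij ▸ hselfA i⟩
      · exact hAA i j hij)
  exact ⟨f, hf, fun a b c hab hac hbc =>
    (hiff a b c hab hac hbc).trans (concur_iff a b c hab hac hbc)⟩

def vec3 (x y z : ℝ) : E3 := WithLp.toLp 2 (fun k : Fin 3 => if k = 0 then x else if k = 1 then y else z : Fin 3 → ℝ)

@[simp] lemma vec3_0 (x y z : ℝ) : vec3 x y z 0 = x := rfl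
@[simp] lemma vec3_1 (x y z : ℝ) : vec3 x y z 1 = y := rfl
@[simp] lemma vec3_2 (x y z : ℝ) : vec3 x y z 2 = z := rfl

lemma vec3_add_smul (x y w a b c t : ℝ) :
    vec3 x y w + t • vec3 a b c = vec3 (x + t*a) (y + t*b) (w + t*c) := by
  ext k
  fin_cases k <;>
    simp [vec3, PiLp.add_apply, PiLp.smul_apply, smul_eq_mul]

lemma line3_meet_iff (x y w a b c x' y' w' a' b' c' : ℝ) :
    (lineSet (vec3 x y w) (vec3 a b c) ∩ lineSet (vec3 x' y' w') (vec3 a' b' c')).Nonempty ↔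
    ∃ t s : ℝ, x + t*a = x' + s*a' ∧ y + t*b = y' + s*b' ∧ w + t*c = w' + s*c' := by
  constructor
  · rintro ⟨z, ⟨t, rfl⟩, ⟨s, hz⟩⟩
    rw [vec3_add_smul, vec3_add_smul] at hz
    exact ⟨t, s, congrArg (fun v : E3 => v 0) hz, congrArg (fun v : E3 => v 1) hz,
      congrArg (fun v : E3 => v 2) hz⟩
  · rintro ⟨t, s, h0, h1, h2⟩
    refine ⟨vec3 (x + t*a) (y + t*b) (w + t*c), ⟨t, (vec3_add_smul ..).symm⟩,
      ⟨s, ?_⟩⟩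
    rw [vec3_add_smul]
    rw [h0, h1, h2]

lemma vec3_ne_zero_of_0 {x y z : ℝ} (h : x ≠ 0) : vec3 x y z ≠ 0 :=
  fun h0 => h (by simpa using congrArg (fun v : E3 => v 0) h0)

lemma vec3_ne_zero_of_2 {x y z : ℝ} (h : z ≠ 0) : vec3 x y z ≠ 0 :=
  fun h0 => h (by simpa using congrArg (fun v : E3 => v 2) h0)

noncomputable def mkLine (p d : E3) : AffineSubspace ℝ E3 := AffineSubspace.mk' p (ℝ ∙ d)

lemma mkLine_coe (p d : E3) : (mkLine p d : Set E3) = lineSet p d := by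
  ext x
  rw [mkLine, SetLike.mem_coe, AffineSubspace.mem_mk',
    Submodule.mem_span_singleton]
  show _ ↔ ∃ t : ℝ, x = p + t • d
  constructor
  · rintro ⟨t, ht⟩
    refine ⟨t, ?_⟩
    have : t • d = x - p := by rw [ht]; rfl
    rw [this]; abel
  · rintro ⟨t, rfl⟩
    refine ⟨t, ?_⟩
    show t • d = p + t • d - p
    abel

lemma mkLine_isLine3 (p d : E3) (hd : d ≠ 0) : IsLine3 (mkLine p d) := by
  constructor
  · exact ⟨p, AffineSubspace.self_mem_mk' p _⟩
  · rw [mkLine, AffineSubspace.direction_mk']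
    exact finrank_span_singleton hd

theorem construct {n : ℕ} (S : Finset (Finset (Fin n)))
    (hcard : ∀ C ∈ S, 2 ≤ C.card)
    (hpair : ∀ i j : Fin n, i ≠ j → ∃! C : Finset (Fin n), C ∈ S ∧ i ∈ C ∧ j ∈ C)
    (f : Fin n → E2) (hinj : Function.Injective f)
    (hcol : ∀ a b c : Fin n, a ≠ b → a ≠ c → b ≠ c →
      (Collinear ℝ ({f a, f b, f c} : Set E2) ↔ ∃ C ∈ S, a ∈ C ∧ b ∈ C ∧ c ∈ C)) :
    ∃ ℓ : HVertex n S → AffineSubspace ℝ E3,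
      (∀ v, IsLine3 (ℓ v)) ∧
      ∀ v w : HVertex n S, v ≠ w →
        (HAdj n S v w ↔ ((ℓ v : Set E3) ∩ (ℓ w : Set E3)).Nonempty) := by
  classical
  obtain ⟨px, hpx⟩ : ∃ px : Fin n → ℝ, ∀ i, px i = f i 0 := ⟨_, fun _ => rfl⟩
  obtain ⟨py, hpy⟩ : ∃ py : Fin n → ℝ, ∀ i, py i = f i 1 := ⟨_, fun _ => rfl⟩
  have hdet_iff : ∀ a b c : Fin n, a ≠ b → a ≠ c → b ≠ c →
      ((px b - px a) * (py c - py a) - (px c - px a) * (py b - py a) = 0 ↔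
        ∃ C ∈ S, a ∈ C ∧ b ∈ C ∧ c ∈ C) := by
    intro a b c hab hac hbc
    rw [← hcol a b c hab hac hbc, collinear_iff_det2]
    simp only [hpx, hpy]
    exact Iff.rfl
  -- shear to make first coordinates distinct
  obtain ⟨s, hs⟩ := Finset.exists_notMem
    ((Finset.univ ×ˢ Finset.univ).image fun pr : Fin n × Fin n =>
      -((px pr.1 - px pr.2) / (py pr.1 - py pr.2)))
  obtain ⟨p, hp⟩ : ∃ p : Fin n → ℝ, ∀ i, p i = px i + s * py i := ⟨_, fun _ => rfl⟩
  obtain ⟨q, hq⟩ : ∃ q : Fin n → ℝ, ∀ i, q i = py i := ⟨_, fun _ => rfl⟩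
  have hpinj : ∀ i j : Fin n, i ≠ j → p i ≠ p j := by
    intro i j hij heq
    rw [hp, hp] at heq
    by_cases hpy2 : py i = py j
    · have hpx2 : px i = px j := by rw [hpy2] at heq; linarith
      exact hij (hinj (e2_ext (by rw [← hpx, ← hpx, hpx2]) (by rw [← hpy, ← hpy, hpy2])))
    · apply hs
      simp only [Finset.mem_image, Finset.mem_product]
      refine ⟨(i, j), by simp, ?_⟩
      have : py i - py j ≠ 0 := sub_ne_zero_of_ne hpy2
      field_simp
      linarith
  have hdet : ∀ a b c : Fin n, a ≠ b → a ≠ c → b ≠ c →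
      ((p b - p a) * (q c - q a) - (p c - p a) * (q b - q a) = 0 ↔
        ∃ C ∈ S, a ∈ C ∧ b ∈ C ∧ c ∈ C) := by
    intro a b c hab hac hbc
    have e : (p b - p a) * (q c - q a) - (p c - p a) * (q b - q a)
        = (px b - px a) * (py c - py a) - (px c - px a) * (py b - py a) := by
      simp only [hp, hq]; ring
    rw [e, hdet_iff a b c hab hac hbc]
  -- choose two points of each flat
  have hex : ∀ C : {C : Finset (Fin n) // C ∈ S}, ∃ a b : Fin n, a ∈ C.1 ∧ b ∈ C.1 ∧ a ≠ b := by
    intro C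
    obtain ⟨a, ha, b, hb, hab⟩ := Finset.one_lt_card.1 (hcard C.1 C.2)
    exact ⟨a, b, ha, hb, hab⟩
  choose ca cb hca hcb hcab using hex
  have hpab : ∀ C, p (cb C) - p (ca C) ≠ 0 :=
    fun C => sub_ne_zero_of_ne (Ne.symm (hpinj _ _ (hcab C)))
  obtain ⟨m, hm⟩ : ∃ m : {C : Finset (Fin n) // C ∈ S} → ℝ,
      ∀ C, m C = (q (cb C) - q (ca C)) / (p (cb C) - p (ca C)) := ⟨_, fun _ => rfl⟩
  obtain ⟨cy, hcy⟩ : ∃ cy : {C : Finset (Fin n) // C ∈ S} → ℝ,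
      ∀ C, cy C = q (ca C) - m C * p (ca C) := ⟨_, fun _ => rfl⟩
  have hm' : ∀ C, m C * (p (cb C) - p (ca C)) = q (cb C) - q (ca C) := by
    intro C
    rw [hm]
    exact div_mul_cancel₀ _ (hpab C)
  have KEY : ∀ (C : {C : Finset (Fin n) // C ∈ S}) (i : Fin n),
      q i = m C * p i + cy C ↔ i ∈ C.1 := by
    intro C i
    by_cases hia : i = ca C
    · subst hia
      constructor
      · intro _; exact hca C
      · intro _; rw [hcy]; ring
    · by_cases hib : i = cb C
      · subst hib
        constructor
        · intro _; exact hcb C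
        · intro _
          rw [hcy]
          linear_combination -hm' C
      · have h3 := hdet (ca C) (cb C) i (hcab C) (Ne.symm hia) (Ne.symm hib)
        have hRHS : (∃ C' ∈ S, ca C ∈ C' ∧ cb C ∈ C' ∧ i ∈ C') ↔ i ∈ C.1 := by
          constructor
          · rintro ⟨C', hC'S, h1, h2, h3'⟩
            obtain ⟨D, -, huniq⟩ := hpair (ca C) (cb C) (hcab C)
            have e1 : C' = D := huniq C' ⟨hC'S, h1, h2⟩
            have e2 : C.1 = D := huniq C.1 ⟨C.2, hca C, hcb C⟩
            rwa [e1.trans e2.symm] at h3'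
          · intro hi
            exact ⟨C.1, C.2, hca C, hcb C, hi⟩
        rw [hRHS] at h3
        rw [← h3]
        constructor
        · intro hq2
          rw [hcy] at hq2
          linear_combination (p (cb C) - p (ca C)) * hq2 + (p i - p (ca C)) * hm' C
        · intro hdet0
          have h2 : (p (cb C) - p (ca C)) * (q i - m C * p i - cy C) = 0 := by
            rw [hcy]
            linear_combination hdet0 - (p i - p (ca C)) * hm' C
          rcases mul_eq_zero.1 h2 with h4 | h4
          · exact absurd h4 (hpab C)
          · linarith
  have hCC : ∀ C C' : {C : Finset (Fin n) // C ∈ S}, m C = m C' → cy C = cy C' → C = C' := by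
    intro C C' h1 h2
    apply Subtype.ext
    apply Finset.ext
    intro i
    rw [← KEY C i, ← KEY C' i, h1, h2]
  -- choose the height offset δ
  obtain ⟨δ, hδm⟩ := Finset.exists_notMem
    (insert (0 : ℝ) (Finset.image (fun pr : Fin n × {C : Finset (Fin n) // C ∈ S} =>
      cy pr.2 + m pr.2 * p pr.1 - q pr.1) Finset.univ))
  have hδ0 : δ ≠ 0 := by
    intro h
    apply hδm
    rw [h]
    exact Finset.mem_insert_self 0 _
  have hδ : ∀ (j : Fin n) (C : {C : Finset (Fin n) // C ∈ S}),
      q j + δ - m C * p j ≠ cy C := by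
    intro j C h
    apply hδm
    apply Finset.mem_insert_of_mem
    simp only [Finset.mem_image, Finset.mem_univ, true_and]
    exact ⟨(j, C), by linarith⟩
  -- the lines
  refine ⟨fun v => match v with
    | Sum.inl i => mkLine (vec3 0 (q i) 0) (vec3 1 (-(p i)) 0)
    | Sum.inr (Sum.inl i) => mkLine (vec3 0 (q i + δ) 0) (vec3 1 (-(p i)) 0)
    | Sum.inr (Sum.inr C) => mkLine (vec3 (m C) (cy C) 0) (vec3 0 0 1), ?_, ?_⟩
  · rintro (i | i | C)
    · exact mkLine_isLine3 _ _ (vec3_ne_zero_of_0 one_ne_zero)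
    · exact mkLine_isLine3 _ _ (vec3_ne_zero_of_0 one_ne_zero)
    · exact mkLine_isLine3 _ _ (vec3_ne_zero_of_2 one_ne_zero)
  -- scalar intersection facts
  have kAA : ∀ i j : Fin n, i ≠ j →
      (lineSet (vec3 0 (q i) 0) (vec3 1 (-(p i)) 0) ∩
        lineSet (vec3 0 (q j) 0) (vec3 1 (-(p j)) 0)).Nonempty := by
    intro i j hij
    rw [line3_meet_iff]
    have hpij : p i - p j ≠ 0 := sub_ne_zero_of_ne (hpinj i j hij)
    refine ⟨(q i - q j) / (p i - p j), (q i - q j) / (p i - p j), by ring, ?_, by ring⟩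
    field_simp
    ring
  have kBB : ∀ i j : Fin n, i ≠ j →
      (lineSet (vec3 0 (q i + δ) 0) (vec3 1 (-(p i)) 0) ∩
        lineSet (vec3 0 (q j + δ) 0) (vec3 1 (-(p j)) 0)).Nonempty := by
    intro i j hij
    rw [line3_meet_iff]
    have hpij : p i - p j ≠ 0 := sub_ne_zero_of_ne (hpinj i j hij)
    refine ⟨(q i - q j) / (p i - p j), (q i - q j) / (p i - p j), by ring, ?_, by ring⟩
    field_simp
    ring
  have kAB : ∀ i j : Fin n,
      ((lineSet (vec3 0 (q i) 0) (vec3 1 (-(p i)) 0) ∩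
        lineSet (vec3 0 (q j + δ) 0) (vec3 1 (-(p j)) 0)).Nonempty ↔ i ≠ j) := by
    intro i j
    rw [line3_meet_iff]
    constructor
    · rintro ⟨t, u, h0, h1, -⟩ rfl
      have : t = u := by linarith
      rw [this] at h1
      exact hδ0 (by linarith)
    · intro hij
      have hpij : p i - p j ≠ 0 := sub_ne_zero_of_ne (hpinj i j hij)
      refine ⟨(q i - q j - δ) / (p i - p j), (q i - q j - δ) / (p i - p j), by ring, ?_, by ring⟩
      field_simp
      ring
  have kAC : ∀ (i : Fin n) (C : {C : Finset (Fin n) // C ∈ S}),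
      ((lineSet (vec3 0 (q i) 0) (vec3 1 (-(p i)) 0) ∩
        lineSet (vec3 (m C) (cy C) 0) (vec3 0 0 1)).Nonempty ↔ i ∈ C.1) := by
    intro i C
    rw [line3_meet_iff, ← KEY C i]
    constructor
    · rintro ⟨t, u, h0, h1, -⟩
      have ht : t = m C := by linarith
      rw [ht] at h1
      linarith
    · intro h
      exact ⟨m C, 0, by ring, by linarith, by ring⟩
  have kBC : ∀ (j : Fin n) (C : {C : Finset (Fin n) // C ∈ S}),
      ¬ (lineSet (vec3 0 (q j + δ) 0) (vec3 1 (-(p j)) 0) ∩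
        lineSet (vec3 (m C) (cy C) 0) (vec3 0 0 1)).Nonempty := by
    intro j C h
    rw [line3_meet_iff] at h
    obtain ⟨t, u, h0, h1, -⟩ := h
    have ht : t = m C := by linarith
    rw [ht] at h1
    exact hδ j C (by linarith)
  have kCC : ∀ C C' : {C : Finset (Fin n) // C ∈ S}, C ≠ C' →
      ¬ (lineSet (vec3 (m C) (cy C) 0) (vec3 0 0 1) ∩
        lineSet (vec3 (m C') (cy C') 0) (vec3 0 0 1)).Nonempty := by
    intro C C' hne h
    rw [line3_meet_iff] at h
    obtain ⟨t, u, h0, h1, -⟩ := h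
    exact hne (hCC C C' (by linarith) (by linarith))
  -- final adjacency check
  rintro (i | i | C) (j | j | C') hvw
  · have hij : i ≠ j := fun h => hvw (by rw [h])
    simp only [HAdj, mkLine_coe]
    exact iff_of_true hij (kAA i j hij)
  · simp only [HAdj, mkLine_coe]
    rw [kAB i j]
  · simp only [HAdj, mkLine_coe]
    rw [kAC i C']
  · simp only [HAdj, mkLine_coe]
    rw [Set.inter_comm, kAB j i]
    exact ne_comm
  · have hij : i ≠ j := fun h => hvw (by rw [h])
    simp only [HAdj, mkLine_coe]
    exact iff_of_true hij (kBB i j hij)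
  · simp only [HAdj, mkLine_coe]
    exact iff_of_false (fun h => h) (kBC i C')
  · simp only [HAdj, mkLine_coe]
    rw [Set.inter_comm, kAC j C]
  · simp only [HAdj, mkLine_coe]
    exact iff_of_false (fun h => h) (fun h => kBC j C (by rwa [Set.inter_comm] at h))
  · have hne : C ≠ C' := fun h => hvw (by rw [h])
    simp only [HAdj, mkLine_coe]
    exact iff_of_false (fun h => h) (kCC C C' hne)

end HProof

/-- Correctness of the reduction in Theorem 1.1: the graph `H` built from the
rank-2 flats `S` of a simple rank-3 matroid on `Fin n` is an intersection graph
of lines in ℝ³ if and only if the matroid is affinely realizable in the plane. -/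
theorem H_line_realizable_iff_matroid_realizable
    (n : ℕ) (hn : 4 ≤ n) (S : Finset (Finset (Fin n)))
    (hcard : ∀ C ∈ S, 2 ≤ C.card)
    (hpair : ∀ i j : Fin n, i ≠ j → ∃! C : Finset (Fin n), C ∈ S ∧ i ∈ C ∧ j ∈ C)
    (hS : 2 ≤ S.card) :
    (∃ ℓ : HVertex n S → AffineSubspace ℝ (EuclideanSpace ℝ (Fin 3)),
        (∀ v, IsLine3 (ℓ v)) ∧
        ∀ v w : HVertex n S, v ≠ w →
          (HAdj n S v w ↔
            ((ℓ v : Set (EuclideanSpace ℝ (Fin 3))) ∩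
              (ℓ w : Set (EuclideanSpace ℝ (Fin 3)))).Nonempty)) ↔
    (∃ f : Fin n → EuclideanSpace ℝ (Fin 2),
        Function.Injective f ∧
        ∀ a b c : Fin n, a ≠ b → a ≠ c → b ≠ c →
          (Collinear ℝ {f a, f b, f c} ↔
            ∃ C ∈ S, a ∈ C ∧ b ∈ C ∧ c ∈ C)) := by
  constructor
  · rintro ⟨ℓ, hlines, hadj⟩
    by_cases hsmall : ∀ C : {C : Finset (Fin n) // C ∈ S},
        ∃ i i' : Fin n, i ≠ i' ∧ i ∉ C.1 ∧ i' ∉ C.1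
    · -- generic case
      refine HProof.caseII hn hcard hpair hS hsmall
        (fun i => (ℓ (Sum.inl i) : Set (EuclideanSpace ℝ (Fin 3))))
        (fun i => (ℓ (Sum.inr (Sum.inl i)) : Set (EuclideanSpace ℝ (Fin 3))))
        (fun C => (ℓ (Sum.inr (Sum.inr C)) : Set (EuclideanSpace ℝ (Fin 3))))
        (fun i => HProof.isLine3_param (hlines _))
        (fun i => HProof.isLine3_param (hlines _))
        (fun C => HProof.isLine3_param (hlines _))
        ?_ ?_ ?_ ?_ ?_
      · intro i j hij
        exact (hadj (Sum.inl i) (Sum.inl j) (fun h => hij (Sum.inl.inj h))).mp hij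
      · intro i j hij
        exact (hadj (Sum.inl i) (Sum.inr (Sum.inl j)) (by simp)).mp hij
      · intro i
        rw [← Set.not_nonempty_iff_eq_empty]
        intro hne
        exact (hadj (Sum.inl i) (Sum.inr (Sum.inl i)) (by simp)).mpr hne rfl
      · intro i C hiC
        exact (hadj (Sum.inl i) (Sum.inr (Sum.inr C)) (by simp)).mp hiC
      · intro i C hiC
        rw [← Set.not_nonempty_iff_eq_empty]
        intro hne
        exact hiC ((hadj (Sum.inl i) (Sum.inr (Sum.inr C)) (by simp)).mpr hne)
    · -- near-pencil case
      push_neg at hsmall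
      obtain ⟨C, hC⟩ := hsmall
      obtain ⟨j, hj⟩ := HProof.comb_not_univ hcard hpair hS C.1 C.2
      have hbig : ∀ x : Fin n, x ≠ j → x ∈ C.1 := by
        intro x hx
        by_contra hxC
        exact hxC (hC j x (Ne.symm hx) hj)
      exact HProof.caseI hpair j C.1 C.2 hj hbig
  · rintro ⟨f, hinj, hcol⟩
    exact HProof.construct S hcard hpair f hinj hcol
end

section
/- Let C = sphere(c, r) be a circle in ℝ² (r > 0), let m ≥ 1, and let sphere(c₁, r₁), …, sphere(cₘ, rₘ) be m circles each distinct from C (as sets). Then the set C \ ⋃ⱼ sphere(cⱼ, rⱼ) has at most 2m connected components. -/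
open Metric Set Real
local notation "E2" => EuclideanSpace ℝ (Fin 2)

lemma sphere_inter_pair (c₁ c₂ : E2) (r₁ r₂ : ℝ)
    (hne : (sphere c₁ r₁ : Set E2) ≠ sphere c₂ r₂) :
    ∃ a b : E2, (sphere c₁ r₁ ∩ sphere c₂ r₂ : Set E2) ⊆ {a, b} := by
  by_contra h
  push_neg at h
  obtain ⟨p₁, hp₁, -⟩ := not_subset.mp (h c₁ c₁)
  obtain ⟨p₂, hp₂, h2⟩ := not_subset.mp (h p₁ p₁)
  obtain ⟨p₃, hp₃, h3⟩ := not_subset.mp (h p₁ p₂)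
  simp only [mem_insert_iff, mem_singleton_iff, not_or] at h2 h3
  have h12 : p₁ ≠ p₂ := fun e => h2.1 e.symm
  have h13 : p₁ ≠ p₃ := fun e => h3.1 e.symm
  have h23 : p₂ ≠ p₃ := fun e => h3.2 e.symm
  have hcs : EuclideanGeometry.Cospherical ({p₁, p₂, p₃} : Set E2) := by
    refine ⟨c₁, r₁, ?_⟩
    rintro p (rfl | rfl | rfl)
    · exact hp₁.1
    · exact hp₂.1
    · exact hp₃.1
  have hai := hcs.affineIndependent_of_ne h12 h13 h23
  let s : Affine.Simplex ℝ E2 2 := ⟨![p₁, p₂, p₃], hai⟩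
  have hspan : affineSpan ℝ (Set.range s.points) = ⊤ := by
    rw [hai.affineSpan_eq_top_iff_card_eq_finrank_add_one]
    simp [finrank_euclideanSpace_fin]
  have hd : ∀ (c : E2) (r : ℝ), p₁ ∈ sphere c r → p₂ ∈ sphere c r → p₃ ∈ sphere c r →
      c = s.circumcenter ∧ r = s.circumradius := by
    intro c r h1 h2' h3'
    have hmem : c ∈ affineSpan ℝ (Set.range s.points) := hspan ▸ AffineSubspace.mem_top ℝ E2 c
    have hdist : ∀ i, dist (s.points i) c = r := by
      intro i
      fin_cases i <;> [exact h1; exact h2'; exact h3']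
    exact ⟨s.eq_circumcenter_of_dist_eq hmem hdist, s.eq_circumradius_of_dist_eq hmem hdist⟩
  obtain ⟨e1, e2⟩ := hd c₁ r₁ hp₁.1 hp₂.1 hp₃.1
  obtain ⟨f1, f2⟩ := hd c₂ r₂ hp₁.2 hp₂.2 hp₃.2
  exact hne (by rw [e1, e2, f1, f2])

noncomputable def circParam (c : E2) (r : ℝ) (θ : ℝ) : E2 :=
  c + r • (EuclideanSpace.equiv (Fin 2) ℝ).symm ![Real.cos θ, Real.sin θ]

lemma circParam_apply (c : E2) (r θ : ℝ) (i : Fin 2) :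
    circParam c r θ i = c i + r * (![Real.cos θ, Real.sin θ] i) := rfl

lemma circParam_cont (c : E2) (r : ℝ) : Continuous (circParam c r) := by
  refine continuous_const.add (Continuous.const_smul ?_ r)
  exact (EuclideanSpace.equiv (Fin 2) ℝ).symm.continuous.comp
    (continuous_pi fun i => by fin_cases i <;> simp [Real.continuous_cos, Real.continuous_sin])

lemma circParam_mem (c : E2) {r : ℝ} (hr : 0 < r) (θ : ℝ) : circParam c r θ ∈ sphere c r := by
  rw [mem_sphere, dist_eq_norm]
  have : circParam c r θ - c = r • (EuclideanSpace.equiv (Fin 2) ℝ).symm ![Real.cos θ, Real.sin θ] := by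
    simp [circParam]
  rw [this, norm_smul]
  have : ‖(EuclideanSpace.equiv (Fin 2) ℝ).symm ![Real.cos θ, Real.sin θ]‖ = 1 := by
    rw [EuclideanSpace.norm_eq, Fin.sum_univ_two,
      show ‖((EuclideanSpace.equiv (Fin 2) ℝ).symm ![Real.cos θ, Real.sin θ] : E2) 0‖ = ‖Real.cos θ‖ from rfl,
      show ‖((EuclideanSpace.equiv (Fin 2) ℝ).symm ![Real.cos θ, Real.sin θ] : E2) 1‖ = ‖Real.sin θ‖ from rfl,
      Real.norm_eq_abs, Real.norm_eq_abs, sq_abs, sq_abs, Real.cos_sq_add_sin_sq, Real.sqrt_one]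
  rw [this, mul_one, Real.norm_eq_abs, abs_of_pos hr]

lemma circParam_surj (c : E2) {r : ℝ} (hr : 0 < r) {p : E2} (hp : p ∈ sphere c r) :
    ∃ θ, circParam c r θ = p := by
  set z : ℂ := ⟨(p - c) 0, (p - c) 1⟩ with hz
  have hnorm : ‖p - c‖ = r := by rwa [← dist_eq_norm, ← mem_sphere]
  have habs : ‖z‖ = r := by
    rw [Complex.norm_def, Complex.normSq_mk]
    rw [EuclideanSpace.norm_eq] at hnorm
    simpa [Fin.sum_univ_two, sq] using hnorm
  have hz0 : z ≠ 0 := by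
    intro h
    rw [h] at habs
    simp at habs
    exact hr.ne' habs.symm
  refine ⟨Complex.arg z, ?_⟩
  have hcos : Real.cos (Complex.arg z) = (p - c) 0 / r := by
    rw [Complex.cos_arg hz0, habs]
  have hsin : Real.sin (Complex.arg z) = (p - c) 1 / r := by
    rw [Complex.sin_arg, habs]
  ext i
  rw [circParam_apply]
  fin_cases i
  · show c 0 + r * Real.cos z.arg = p 0
    rw [hcos, mul_div_cancel₀ _ hr.ne']
    show c 0 + ((p - c) 0) = p 0
    simp [PiLp.sub_apply]
  · show c 1 + r * Real.sin z.arg = p 1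
    rw [hsin, mul_div_cancel₀ _ hr.ne']
    show c 1 + ((p - c) 1) = p 1
    simp [PiLp.sub_apply]

lemma circParam_inj (c : E2) {r : ℝ} (hr : 0 < r) {α β : ℝ}
    (h : circParam c r α = circParam c r β) : ∃ k : ℤ, α - β = 2 * π * k := by
  have h0 : c 0 + r * Real.cos α = c 0 + r * Real.cos β := congrArg (fun v : E2 => v 0) h
  have h1 : c 1 + r * Real.sin α = c 1 + r * Real.sin β := congrArg (fun v : E2 => v 1) h
  have hcos : Real.cos α = Real.cos β := by
    have := add_left_cancel h0
    exact mul_left_cancel₀ hr.ne' this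
  have hsin : Real.sin α = Real.sin β := by
    have := add_left_cancel h1
    exact mul_left_cancel₀ hr.ne' this
  exact Real.Angle.angle_eq_iff_two_pi_dvd_sub.mp (Real.Angle.cos_sin_inj hcos hsin)

lemma circParam_periodic (c : E2) (r : ℝ) (θ : ℝ) (k : ℤ) :
    circParam c r (θ + 2 * π * k) = circParam c r θ := by
  ext i
  have hc : Real.cos (θ + 2 * π * k) = Real.cos θ := by
    rw [show (2 : ℝ) * π * k = (k : ℝ) * (2 * π) by ring, Real.cos_add_int_mul_two_pi]
  have hs : Real.sin (θ + 2 * π * k) = Real.sin θ := by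
    rw [show (2 : ℝ) * π * k = (k : ℝ) * (2 * π) by ring, Real.sin_add_int_mul_two_pi]
  fin_cases i
  · show c 0 + r * Real.cos (θ + 2 * π * k) = c 0 + r * Real.cos θ
    rw [hc]
  · show c 1 + r * Real.sin (θ + 2 * π * k) = c 1 + r * Real.sin θ
    rw [hs]

lemma circParam_injOn (c : E2) {r : ℝ} (hr : 0 < r) (w : ℝ) :
    Set.InjOn (circParam c r) (Set.Ioc w (w + 2 * π)) := by
  intro α hα β hβ h
  obtain ⟨k, hk⟩ := circParam_inj c hr h
  have hπ := Real.pi_pos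
  have : |α - β| < 2 * π := by
    rw [abs_sub_lt_iff]
    constructor <;> [linarith [hα.1, hα.2, hβ.1, hβ.2]; linarith [hα.1, hα.2, hβ.1, hβ.2]]
  rw [hk] at this
  have : |(k : ℝ)| < 1 := by
    rw [abs_mul, abs_of_pos (by linarith : (0:ℝ) < 2 * π)] at this
    nlinarith [abs_nonneg (k : ℝ)]
  have hk0 : k = 0 := by
    have h' := abs_lt.mp this
    have h1 : (-1 : ℤ) < k := by exact_mod_cast h'.1
    have h2 : (k : ℤ) < 1 := by exact_mod_cast h'.2
    omega
  rw [hk0] at hk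
  simp at hk
  linarith [hk]

lemma arc_cover (c : E2) {r : ℝ} (hr : 0 < r) (S : Set E2) (hSs : S ⊆ sphere c r)
    (hfin : S.Finite) (hSne : S.Nonempty) :
    ∃ B : E2 → Set E2,
      (∀ s ∈ S, IsPreconnected (B s) ∧ (B s).Nonempty ∧ B s ⊆ sphere c r \ S) ∧
      ∀ p ∈ sphere c r \ S, ∃ s ∈ S, p ∈ B s := by
  have hπ := Real.pi_pos
  set φ := circParam c r with hφdef
  have hNfin : ∀ w : ℝ, (φ ⁻¹' S ∩ Set.Ioc w (w + 2*π)).Finite := by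
    intro w
    apply Set.Finite.of_finite_image (f := φ)
    · exact hfin.subset (by rintro _ ⟨x, ⟨hx, -⟩, rfl⟩; exact hx)
    · exact (circParam_injOn c hr w).mono inter_subset_right
  have hper : ∀ (θ : ℝ) (k : ℤ), φ (θ + 2*π*k) = φ θ := circParam_periodic c r
  have hnxt : ∀ α : ℝ, ∃ β : ℝ, φ α ∈ S → IsLeast (φ ⁻¹' S ∩ Set.Ioc α (α + 2*π)) β := by
    intro α
    by_cases h : φ α ∈ S
    · have hne' : (φ ⁻¹' S ∩ Set.Ioc α (α + 2*π)).Nonempty := by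
        refine ⟨α + 2*π, ?_, ⟨by linarith, le_rfl⟩⟩
        show φ (α + 2*π) ∈ S
        rw [show α + 2*π = α + 2*π*((1:ℤ):ℝ) by push_cast; ring, hper]
        exact h
      obtain ⟨β, hβ, hmin⟩ := Set.exists_min_image _ id (hNfin α) hne'
      exact ⟨β, fun _ => ⟨hβ, fun x hx => hmin x hx⟩⟩
    · exact ⟨0, fun h' => absurd h' h⟩
  choose nxt hnxt using hnxt
  have hnxt_shift : ∀ (α : ℝ) (k : ℤ), φ α ∈ S → nxt (α + 2*π*k) = nxt α + 2*π*k := by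
    intro α k hα
    have hαk : φ (α + 2*π*k) ∈ S := by rw [hper]; exact hα
    have hIs := hnxt α hα
    refine (hnxt _ hαk).unique ?_
    constructor
    · refine ⟨?_, ⟨by linarith [hIs.1.2.1], by linarith [hIs.1.2.2]⟩⟩
      show φ (nxt α + 2*π*k) ∈ S
      rw [hper]
      exact hIs.1.1
    · rintro x ⟨hxS, hx1, hx2⟩
      have hxk : x - 2*π*k ∈ φ ⁻¹' S ∩ Set.Ioc α (α + 2*π) := by
        refine ⟨?_, ⟨by linarith, by linarith⟩⟩
        show φ (x - 2*π*k) ∈ S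
        have hx' : φ ((x - 2*π*(k:ℝ)) + 2*π*(k:ℝ)) ∈ S := by
          rw [show (x - 2*π*(k:ℝ)) + 2*π*(k:ℝ) = x by ring]
          exact hxS
        rwa [hper] at hx'
      have := hIs.2 hxk
      linarith
  have hl : ∀ s : E2, ∃ α, s ∈ S → φ α = s := by
    intro s
    by_cases h : s ∈ S
    · obtain ⟨θ, hθ⟩ := circParam_surj c hr (hSs h)
      exact ⟨θ, fun _ => hθ⟩
    · exact ⟨0, fun h' => absurd h' h⟩
  choose lft hlft using hl
  refine ⟨fun s => φ '' Set.Ioo (lft s) (nxt (lft s)), ?_, ?_⟩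
  · intro s hs
    have hφℓ : φ (lft s) ∈ S := by rw [hlft s hs]; exact hs
    have hIs := hnxt (lft s) hφℓ
    have hlt : lft s < nxt (lft s) := hIs.1.2.1
    refine ⟨isPreconnected_Ioo.image φ (circParam_cont c r).continuousOn,
      (Set.nonempty_Ioo.2 hlt).image φ, ?_⟩
    rintro _ ⟨t, ht, rfl⟩
    refine ⟨circParam_mem c hr t, fun hφt => ?_⟩
    have htm : t ∈ φ ⁻¹' S ∩ Set.Ioc (lft s) (lft s + 2*π) :=
      ⟨hφt, ht.1, le_trans ht.2.le hIs.1.2.2⟩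
    exact absurd (hIs.2 htm) (not_le.mpr ht.2)
  · rintro p ⟨hpc, hpS⟩
    obtain ⟨θ, hθ⟩ := circParam_surj c hr hpc
    rw [← hφdef] at hθ
    have hWfin : (φ ⁻¹' S ∩ Set.Ioc (θ - 2*π) θ).Finite := by
      have := hNfin (θ - 2*π)
      rwa [sub_add_cancel] at this
    have hWne : (φ ⁻¹' S ∩ Set.Ioc (θ - 2*π) θ).Nonempty := by
      obtain ⟨s₀, hs₀⟩ := hSne
      obtain ⟨α₀, hα₀⟩ := circParam_surj c hr (hSs hs₀)
      rw [← hφdef] at hα₀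
      have h2π : (0:ℝ) < 2*π := by linarith
      refine ⟨toIocMod h2π (θ - 2*π) α₀, ?_, ?_⟩
      · show φ _ ∈ S
        rw [toIocMod, show α₀ - toIocDiv h2π (θ - 2*π) α₀ • (2*π) =
          α₀ + 2*π*((-(toIocDiv h2π (θ - 2*π) α₀) : ℤ) : ℝ) by push_cast [zsmul_eq_mul]; ring,
          hper, hα₀]
        exact hs₀
      · have := toIocMod_mem_Ioc h2π (θ - 2*π) α₀
        rwa [sub_add_cancel] at this
    obtain ⟨α, hαW, hαmax⟩ := Set.exists_max_image _ id hWfin hWne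
    have hφα : φ α ∈ S := hαW.1
    have hαθ : α < θ := lt_of_le_of_ne hαW.2.2 (fun e => hpS (by rw [← hθ, ← e]; exact hφα))
    have hIs := hnxt α hφα
    have hθlt : θ < nxt α := by
      by_contra hle
      push_neg at hle
      have hmem : nxt α ∈ φ ⁻¹' S ∩ Set.Ioc (θ - 2*π) θ :=
        ⟨hIs.1.1, ⟨by linarith [hIs.1.2.1, hαW.2.1], hle⟩⟩
      have := hαmax _ hmem
      simp only [id] at this
      linarith [hIs.1.2.1]
    refine ⟨φ α, hφα, ?_⟩
    have hℓα : φ (lft (φ α)) = φ α := hlft _ hφα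
    obtain ⟨k, hk⟩ := circParam_inj c hr hℓα
    have hℓeq : lft (φ α) = α + 2*π*(k:ℝ) := by linarith
    have hshift := hnxt_shift α k hφα
    refine ⟨θ + 2*π*(k:ℝ), ?_, ?_⟩
    · rw [hℓeq, hshift]
      exact ⟨by linarith, by linarith⟩
    · rw [hper]
      exact hθ

/-- Removing `m` circles, each distinct (as a set) from the circle `C = sphere c r`,
leaves at most `2 * m` connected components of `C`. -/
theorem circle_minus_m_circles_components
    (c : EuclideanSpace ℝ (Fin 2)) (r : ℝ) (hr : 0 < r)
    (m : ℕ) (hm : 1 ≤ m)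
    (c' : Fin m → EuclideanSpace ℝ (Fin 2)) (r' : Fin m → ℝ)
    (hr' : ∀ j, 0 < r' j)
    (hne : ∀ j, (Metric.sphere (c' j) (r' j) : Set (EuclideanSpace ℝ (Fin 2))) ≠
      Metric.sphere c r)
    (A : Set (EuclideanSpace ℝ (Fin 2)))
    (hA : A = Metric.sphere c r \ ⋃ j, Metric.sphere (c' j) (r' j)) :
    ∃ T : Finset (Set (EuclideanSpace ℝ (Fin 2))),
      T.card ≤ 2 * m ∧ ∀ p ∈ A, connectedComponentIn A p ∈ T := by
  classical
  set S : Set E2 := sphere c r ∩ ⋃ j, sphere (c' j) (r' j) with hS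
  have hA' : A = sphere c r \ S := by rw [hA, hS, Set.diff_self_inter]
  have hpair : ∀ j, ∃ a b : E2, (sphere c r ∩ sphere (c' j) (r' j) : Set E2) ⊆ {a, b} :=
    fun j => sphere_inter_pair c (c' j) r (r' j) (hne j).symm
  choose a b hab using hpair
  set F : Finset E2 := Finset.univ.image a ∪ Finset.univ.image b with hF
  have hSF : S ⊆ ↑F := by
    rintro x ⟨hx1, hx2⟩
    simp only [Set.mem_iUnion] at hx2
    obtain ⟨j, hj⟩ := hx2
    have := hab j ⟨hx1, hj⟩
    rcases this with h | h <;>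
      simp only [hF, Finset.coe_union, Finset.coe_image, Set.mem_union, Set.mem_image,
        Finset.coe_univ, Set.image_univ, Set.mem_range]
    · exact Or.inl ⟨j, h.symm⟩
    · exact Or.inr ⟨j, (Set.mem_singleton_iff.mp h).symm⟩
  have hFcard : F.card ≤ 2 * m := by
    rw [hF]
    have h1 := Finset.card_union_le (Finset.univ.image a) (Finset.univ.image b)
    have h2 := Finset.card_image_le (s := (Finset.univ : Finset (Fin m))) (f := a)
    have h3 := Finset.card_image_le (s := (Finset.univ : Finset (Fin m))) (f := b)
    simp only [Finset.card_univ, Fintype.card_fin] at h2 h3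
    omega
  have hSfin : S.Finite := Set.Finite.subset F.finite_toSet hSF
  rcases S.eq_empty_or_nonempty with hSe | hSne
  · have hA'' : A = sphere c r := by rw [hA', hSe, Set.diff_empty]
    have hconn : IsConnected (sphere c r : Set E2) := by
      apply isConnected_sphere ?_ c hr.le
      rw [← Module.finrank_eq_rank, finrank_euclideanSpace_fin]
      exact_mod_cast one_lt_two
    refine ⟨{A}, by simp only [Finset.card_singleton]; omega, fun p hp => ?_⟩
    have : connectedComponentIn A p = A := by
      rw [hA''] at hp ⊢
      exact hconn.isPreconnected.connectedComponentIn hp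
    rw [this]
    exact Finset.mem_singleton_self A
  · obtain ⟨B, hBprop, hBcov⟩ := arc_cover c hr S Set.inter_subset_left hSfin hSne
    have hpt : ∀ s : E2, ∃ x : E2, s ∈ S → x ∈ B s := by
      intro s
      by_cases h : s ∈ S
      · exact ((hBprop s h).2.1).imp fun x hx _ => hx
      · exact ⟨c, fun h' => absurd h' h⟩
    choose pt hpt using hpt
    refine ⟨hSfin.toFinset.image (fun s => connectedComponentIn A (pt s)), ?_, ?_⟩
    · calc (hSfin.toFinset.image (fun s => connectedComponentIn A (pt s))).card
          ≤ hSfin.toFinset.card := Finset.card_image_le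
        _ ≤ F.card := Finset.card_le_card (fun x hx => by
            rw [Set.Finite.mem_toFinset] at hx; exact hSF hx)
        _ ≤ 2 * m := hFcard
    · intro p hp
      have hp' : p ∈ sphere c r \ S := hA' ▸ hp
      obtain ⟨s, hs, hpB⟩ := hBcov p hp'
      obtain ⟨hpre, hne', hsub⟩ := hBprop s hs
      have hsubA : B s ⊆ A := by rw [hA']; exact hsub
      have h1 : B s ⊆ connectedComponentIn A p := hpre.subset_connectedComponentIn hpB hsubA
      have h2 : connectedComponentIn A p = connectedComponentIn A (pt s) :=
        connectedComponentIn_eq (h1 (hpt s hs))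
      rw [h2]
      exact Finset.mem_image_of_mem _ (hSfin.mem_toFinset.mpr hs)
end

section
/- For every n ≥ 1 there exist c₁, …, cₙ ∈ ℝ² and r₁, …, rₙ > 0 such that the set of labels { {i : dist(p, cᵢ) < rᵢ} : p ∈ ℝ², p ∉ ⋃ᵢ sphere(cᵢ, rᵢ) } ⊆ Set (Fin n) has cardinality exactly n(n−1)+2. -/
namespace CircleTight


def arcC {n : ℕ} (j i : Fin n) : Set (Fin n) :=
  if j < i then {k | j < k ∧ k ≤ i} else {k | k ≤ i ∨ j < k}

lemma two_le_of_ne {n : ℕ} {i j : Fin n} (h : i ≠ j) : 2 ≤ n := by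
  by_contra hc
  exact h (Fin.ext (by have := i.isLt; have := j.isLt; omega))

lemma val_add_one' {n : ℕ} [NeZero n] (hn : 2 ≤ n) (k : Fin n) :
    ((k + 1 : Fin n) : ℕ) = if (k : ℕ) = n - 1 then 0 else (k : ℕ) + 1 := by
  have h1 : ((1 : Fin n) : ℕ) = 1 := by
    rw [Fin.val_one']; exact Nat.mod_eq_of_lt (by omega)
  rw [Fin.add_def, h1]
  rcases eq_or_ne (k : ℕ) (n - 1) with h | h
  · simp [h, Nat.sub_add_cancel (by omega : 1 ≤ n)]
  · rw [if_neg h]; exact Nat.mod_eq_of_lt (by have := k.isLt; omega)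

lemma mem_arcC {n : ℕ} {j i k : Fin n} :
    k ∈ arcC j i ↔ (if (j:ℕ) < (i:ℕ) then (j:ℕ) < (k:ℕ) ∧ (k:ℕ) ≤ (i:ℕ)
      else ((k:ℕ) ≤ (i:ℕ) ∨ (j:ℕ) < (k:ℕ))) := by
  unfold arcC
  rcases lt_or_ge j i with h | h
  · rw [if_pos h, if_pos (Fin.lt_def.mp h)]
    simp only [Set.mem_setOf_eq, Fin.lt_def, Fin.le_def]
  · rw [if_neg (not_lt.mpr h), if_neg (not_lt.mpr (Fin.le_def.mp h))]
    simp only [Set.mem_setOf_eq, Fin.lt_def, Fin.le_def]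

lemma mem_arcC_self {n : ℕ} (j i : Fin n) : i ∈ arcC j i := by
  rw [mem_arcC]; split_ifs with h <;> omega

lemma not_mem_arcC_self {n : ℕ} {j i : Fin n} (h : i ≠ j) : j ∉ arcC j i := by
  have hne : (i : ℕ) ≠ (j : ℕ) := fun hc => h (Fin.ext hc)
  rw [mem_arcC]; split_ifs with h' <;> omega

lemma succ_not_mem_arcC {n : ℕ} [NeZero n] {j i : Fin n} (h : i ≠ j) :
    (i + 1) ∉ arcC j i := by
  have hn := two_le_of_ne h
  have hv := val_add_one' hn i
  have hne : (i : ℕ) ≠ (j : ℕ) := fun hc => h (Fin.ext hc)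
  have hjl := j.isLt; have hil := i.isLt
  rw [mem_arcC]; split_ifs with h' <;> split_ifs at hv <;> omega

lemma succ_mem_arcC {n : ℕ} [NeZero n] {j i : Fin n} (h : i ≠ j) :
    (j + 1) ∈ arcC j i := by
  have hn := two_le_of_ne h
  have hv := val_add_one' hn j
  have hne : (i : ℕ) ≠ (j : ℕ) := fun hc => h (Fin.ext hc)
  have hjl := j.isLt; have hil := i.isLt
  rw [mem_arcC]; split_ifs with h' <;> split_ifs at hv <;> omega

lemma eq_of_succ_not_mem {n : ℕ} [NeZero n] {j i k : Fin n} (h : i ≠ j)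
    (hk : k ∈ arcC j i) (hk1 : (k + 1) ∉ arcC j i) : k = i := by
  have hn := two_le_of_ne h
  have hv := val_add_one' hn k
  have hne : (i : ℕ) ≠ (j : ℕ) := fun hc => h (Fin.ext hc)
  have hjl := j.isLt; have hil := i.isLt; have hkl := k.isLt
  rw [mem_arcC] at hk hk1
  apply Fin.ext
  split_ifs at hk hk1 <;> split_ifs at hv <;> omega

lemma eq_of_succ_mem {n : ℕ} [NeZero n] {j i k : Fin n} (h : i ≠ j)
    (hk : k ∉ arcC j i) (hk1 : (k + 1) ∈ arcC j i) : k = j := by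
  have hn := two_le_of_ne h
  have hv := val_add_one' hn k
  have hne : (i : ℕ) ≠ (j : ℕ) := fun hc => h (Fin.ext hc)
  have hjl := j.isLt; have hil := i.isLt; have hkl := k.isLt
  rw [mem_arcC] at hk hk1
  apply Fin.ext
  split_ifs at hk hk1 <;> split_ifs at hv <;> omega

lemma compl_arcC {n : ℕ} {j i : Fin n} (h : i ≠ j) : (arcC j i)ᶜ = arcC i j := by
  have hne : (i : ℕ) ≠ (j : ℕ) := fun hc => h (Fin.ext hc)
  have hjl := j.isLt; have hil := i.isLt
  ext k
  simp only [Set.mem_compl_iff, mem_arcC]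
  have hkl := k.isLt
  split_ifs <;> omega



lemma struct {n : ℕ} [NeZero n] {L : Set (Fin n)}
    (hcon : ∀ k₁ k₂ k : Fin n, k₁ ≤ k → k ≤ k₂ → k₁ ∈ L → k₂ ∈ L → k ∈ L) :
    L = ∅ ∨ L = Set.univ ∨ ∃ j i : Fin n, i ≠ j ∧ L = arcC j i := by
  by_cases he : L = ∅
  · exact Or.inl he
  by_cases hu : L = Set.univ
  · exact Or.inr (Or.inl hu)
  refine Or.inr (Or.inr ?_)
  have hne : L.Nonempty := Set.nonempty_iff_ne_empty.mpr he
  have hfin : L.Finite := Set.toFinite L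
  set F : Finset (Fin n) := hfin.toFinset with hF
  have hFne : F.Nonempty := by
    rwa [hF, Set.Finite.toFinset_nonempty]
  set m : Fin n := F.min' hFne with hm
  set M : Fin n := F.max' hFne with hM
  have hmL : m ∈ L := (Set.Finite.mem_toFinset hfin).mp (F.min'_mem hFne)
  have hML : M ∈ L := (Set.Finite.mem_toFinset hfin).mp (F.max'_mem hFne)
  have hbound : ∀ k ∈ L, m ≤ k ∧ k ≤ M := by
    intro k hk
    have hk' : k ∈ F := by rwa [Set.Finite.mem_toFinset]
    exact ⟨F.min'_le k hk', F.le_max' k hk'⟩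
  have hL : L = {k | m ≤ k ∧ k ≤ M} := by
    ext k
    constructor
    · exact fun hk => hbound k hk
    · rintro ⟨h1, h2⟩; exact hcon m M k h1 h2 hmL hML
  have hnotall : ¬((m : ℕ) = 0 ∧ (M : ℕ) = n - 1) := by
    rintro ⟨h0, hlast⟩
    apply hu
    rw [hL]
    ext k
    simp only [Set.mem_setOf_eq, Set.mem_univ, iff_true, Fin.le_def, h0, hlast]
    have := k.isLt
    omega
  have hn : 1 ≤ n := Nat.one_le_iff_ne_zero.mpr (NeZero.ne n)
  have hmM : (m : ℕ) ≤ (M : ℕ) := Fin.le_def.mp ((hbound M hML).1)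
  have hMl := M.isLt
  by_cases h0 : (m : ℕ) = 0
  · refine ⟨⟨n - 1, by omega⟩, M, ?_, ?_⟩
    · intro hc
      exact hnotall ⟨h0, by rw [hc]⟩
    · refine hL.trans ?_
      ext k
      rw [mem_arcC]
      have := k.isLt
      simp only [Set.mem_setOf_eq, Fin.le_def]
      split_ifs <;> omega
  · refine ⟨⟨(m : ℕ) - 1, by omega⟩, M, ?_, ?_⟩
    · intro hc
      have : (M : ℕ) = (m : ℕ) - 1 := by rw [hc]
      omega
    · refine hL.trans ?_
      ext k
      rw [mem_arcC]
      have := k.isLt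
      simp only [Set.mem_setOf_eq, Fin.le_def]
      split_ifs <;> omega

lemma count {n : ℕ} (hn : 1 ≤ n) :
    Set.ncard {L : Set (Fin n) | L = ∅ ∨ L = Set.univ ∨ ∃ j i : Fin n, i ≠ j ∧ L = arcC j i}
      = n * (n - 1) + 2 := by
  haveI : NeZero n := ⟨by omega⟩
  classical
  set D : Set (Fin n × Fin n) := {q | q.1 ≠ q.2} with hD
  set f : Fin n × Fin n → Set (Fin n) := fun q => arcC q.2 q.1 with hf
  have hT : {L : Set (Fin n) | L = ∅ ∨ L = Set.univ ∨ ∃ j i : Fin n, i ≠ j ∧ L = arcC j i}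
      = insert ∅ (insert Set.univ (f '' D)) := by
    ext L
    simp only [Set.mem_setOf_eq, Set.mem_insert_iff, Set.mem_image, hf, hD]
    constructor
    · rintro (h | h | ⟨j, i, hij, h⟩)
      · exact Or.inl h
      · exact Or.inr (Or.inl h)
      · exact Or.inr (Or.inr ⟨(i, j), hij, h.symm⟩)
    · rintro (h | h | ⟨⟨i, j⟩, hij, h⟩)
      · exact Or.inl h
      · exact Or.inr (Or.inl h)
      · exact Or.inr (Or.inr ⟨j, i, hij, h.symm⟩)
  rw [hT]
  have hunivnot : Set.univ ∉ f '' D := by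
    rintro ⟨⟨i, j⟩, hij, h⟩
    have : j ∈ arcC j i := by rw [show arcC j i = Set.univ from h]; trivial
    exact not_mem_arcC_self hij this
  have hemptynot : ∅ ∉ insert Set.univ (f '' D) := by
    rintro (h | ⟨⟨i, j⟩, hij, h⟩)
    · exact Set.empty_ne_univ h
    · have : i ∈ arcC j i := mem_arcC_self j i
      rw [show arcC j i = ∅ from h] at this
      exact this
  have hinj : Set.InjOn f D := by
    rintro ⟨i, j⟩ hij ⟨i', j'⟩ hij' heq
    simp only [hD, Set.mem_setOf_eq] at hij hij'
    simp only [hf] at heq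
    have hi : i' = i := by
      apply eq_of_succ_not_mem hij
      · rw [heq]; exact mem_arcC_self j' i'
      · rw [heq]; exact succ_not_mem_arcC hij'
    have hj : j' = j := by
      apply eq_of_succ_mem hij
      · rw [heq]; exact not_mem_arcC_self hij'
      · rw [heq]; exact succ_mem_arcC hij'
    simp [hi, hj]
  have hDcard : D.ncard = n * n - n := by
    have : D = ↑(Finset.univ.offDiag : Finset (Fin n × Fin n)) := by
      ext q
      simp [hD, Finset.mem_coe, Finset.mem_offDiag]
    rw [this, Set.ncard_coe_finset, Finset.offDiag_card, Finset.card_univ, Fintype.card_fin]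
  rw [Set.ncard_insert_of_notMem hemptynot (Set.toFinite _),
    Set.ncard_insert_of_notMem hunivnot (Set.toFinite _),
    Set.ncard_image_of_injOn hinj, hDcard]
  obtain ⟨m, rfl⟩ : ∃ m, n = m + 1 := ⟨n - 1, by omega⟩
  simp [Nat.succ_sub_one, Nat.mul_succ]

noncomputable def pt (x : ℝ) : EuclideanSpace ℝ (Fin 2) :=
  WithLp.toLp 2 (fun j : Fin 2 => if j = 0 then x else x^2)

lemma pt_zero (x : ℝ) : pt x 0 = x := rfl
lemma pt_one (x : ℝ) : pt x 1 = x^2 := rfl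

lemma dist_sq (p : EuclideanSpace ℝ (Fin 2)) (x : ℝ) :
    dist p (pt x) = Real.sqrt ((p 0 - x)^2 + (p 1 - x^2)^2) := by
  rw [EuclideanSpace.dist_eq, Fin.sum_univ_two, pt_zero, pt_one,
    Real.dist_eq, Real.dist_eq, sq_abs, sq_abs]

lemma dist_lt_iff (p : EuclideanSpace ℝ (Fin 2)) (x : ℝ) :
    dist p (pt x) < Real.sqrt (1 + x^2 + x^4)
      ↔ (p 0)^2 + (p 1)^2 - 1 < 2 * p 0 * x + 2 * p 1 * x^2 := by
  rw [dist_sq]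
  rw [Real.sqrt_lt_sqrt_iff (by positivity)]
  constructor <;> intro h <;> nlinarith [h]

lemma dist_eq_iff (p : EuclideanSpace ℝ (Fin 2)) (x : ℝ) :
    dist p (pt x) = Real.sqrt (1 + x^2 + x^4)
      ↔ (p 0)^2 + (p 1)^2 - 1 = 2 * p 0 * x + 2 * p 1 * x^2 := by
  rw [dist_sq, Real.sqrt_inj (by positivity) (by positivity)]
  constructor <;> intro h <;> nlinarith [h]

lemma realize (a b t : ℝ) (hab : a ≠ 0 ∨ b ≠ 0) :
    ∃ p : EuclideanSpace ℝ (Fin 2), ∀ x : ℝ,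
      ((p 0)^2 + (p 1)^2 - 1 < 2 * p 0 * x + 2 * p 1 * x^2 ↔ t < a*x + b*x^2)
      ∧ ((p 0)^2 + (p 1)^2 - 1 = 2 * p 0 * x + 2 * p 1 * x^2 ↔ t = a*x + b*x^2) := by
  have hs : 0 < a^2 + b^2 := by
    rcases hab with h | h
    · positivity
    · positivity
  set s := a^2 + b^2 with hsdef
  set R := Real.sqrt (t^2 + s) with hR
  have hR2 : R^2 = t^2 + s := Real.sq_sqrt (by positivity)
  have hRt : |t| < R := by
    rw [← Real.sqrt_sq_eq_abs]
    exact Real.sqrt_lt_sqrt (by positivity) (by linarith)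
  have hlampos : 0 < (t + R) * 2 / s := by
    have hneg : -t < R := by
      rcases abs_cases t with ⟨h1, _⟩ | ⟨h1, _⟩ <;> linarith
    have htR : 0 < t + R := by linarith
    exact div_pos (by linarith) hs
  set lam := (t + R) * 2 / s with hlam
  have hkey : lam^2 * s / 4 - lam * t - 1 = 0 := by
    rw [hlam]
    field_simp
    nlinarith [hR2]
  refine ⟨(WithLp.toLp 2 (fun j : Fin 2 => if j = 0 then lam * a / 2 else lam * b / 2) :
      EuclideanSpace ℝ (Fin 2)), fun x => ?_⟩
  have h0 : (WithLp.toLp 2 (fun j : Fin 2 => if j = 0 then lam * a / 2 else lam * b / 2) :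
      EuclideanSpace ℝ (Fin 2)) 0 = lam * a / 2 := rfl
  have h1 : (WithLp.toLp 2 (fun j : Fin 2 => if j = 0 then lam * a / 2 else lam * b / 2) :
      EuclideanSpace ℝ (Fin 2)) 1 = lam * b / 2 := rfl
  rw [h0, h1]
  have hτ : (lam * a / 2)^2 + (lam * b / 2)^2 - 1 = lam * t := by
    have : (lam * a / 2)^2 + (lam * b / 2)^2 = lam^2 * s / 4 := by
      rw [hsdef]; ring
    rw [this]; linarith [hkey]
  rw [hτ]
  have hq : 2 * (lam * a / 2) * x + 2 * (lam * b / 2) * x^2 = lam * (a*x + b*x^2) := by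
    ring
  rw [hq]
  constructor
  · exact mul_lt_mul_iff_right₀ hlampos
  · exact ⟨fun h => mul_left_cancel₀ (ne_of_gt hlampos) h, fun h => by rw [h]⟩

lemma concave_step {a b t x y z : ℝ} (hb : b ≤ 0) (hxy : x ≤ y) (hyz : y ≤ z)
    (h1 : t < a*x + b*x^2) (h2 : t < a*z + b*z^2) : t < a*y + b*y^2 := by
  rcases eq_or_lt_of_le hxy with rfl | hxy'
  · exact h1
  rcases eq_or_lt_of_le hyz with rfl | hyz'
  · exact h2
  nlinarith [mul_pos (sub_pos.2 h1) (sub_pos.2 hyz'),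
    mul_pos (sub_pos.2 h2) (sub_pos.2 hxy'),
    mul_nonneg (mul_nonneg (neg_nonneg.2 hb) (sub_pos.2 hyz').le) (sub_pos.2 hxy').le,
    mul_pos (sub_pos.2 hxy') (sub_pos.2 hyz'),
    sub_pos.2 (hxy'.trans hyz')]

lemma arc_realizable {n : ℕ} {j i : Fin n} (h : i ≠ j) :
    ∃ a b t : ℝ, (a ≠ 0 ∨ b ≠ 0) ∧
      (∀ k : Fin n, a*((k:ℕ):ℝ) + b*((k:ℕ):ℝ)^2 ≠ t) ∧
      {k : Fin n | t < a*((k:ℕ):ℝ) + b*((k:ℕ):ℝ)^2} = arcC j i := by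
  have hne : (i:ℕ) ≠ (j:ℕ) := fun hc => h (Fin.ext hc)
  have par1 : ∀ k : Fin n, 2*((k:ℕ):ℝ) - 2*((j:ℕ):ℝ) - 1 ≠ 0 := by
    intro k hc
    have : (2*(k:ℕ) : ℝ) = ((2*(j:ℕ)+1 : ℕ) : ℝ) := by push_cast; linarith
    have : 2*(k:ℕ) = 2*(j:ℕ)+1 := by exact_mod_cast this
    omega
  have par2 : ∀ k : Fin n, 2*((k:ℕ):ℝ) - 2*((i:ℕ):ℝ) - 1 ≠ 0 := by
    intro k hc
    have : (2*(k:ℕ) : ℝ) = ((2*(i:ℕ)+1 : ℕ) : ℝ) := by push_cast; linarith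
    have : 2*(k:ℕ) = 2*(i:ℕ)+1 := by exact_mod_cast this
    omega
  rcases lt_or_ge (j:ℕ) (i:ℕ) with hji | hij
  · -- non-wrapping case: concave quadratic
    refine ⟨4*((j:ℕ):ℝ) + 4*((i:ℕ):ℝ) + 4, -4, (2*((j:ℕ):ℝ)+1)*(2*((i:ℕ):ℝ)+1), Or.inr (by norm_num), ?_, ?_⟩
    · intro k hc
      have hfac : (2*((k:ℕ):ℝ) - 2*((j:ℕ):ℝ) - 1) * (2*((k:ℕ):ℝ) - 2*((i:ℕ):ℝ) - 1) = 0 := by nlinarith [hc]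
      rcases mul_eq_zero.mp hfac with hc' | hc'
      · exact par1 k hc'
      · exact par2 k hc'
    · ext k
      rw [mem_arcC, if_pos hji]
      simp only [Set.mem_setOf_eq]
      constructor
      · intro hlt
        by_contra hcon
        push_neg at hcon
        rcases le_or_gt (k:ℕ) (j:ℕ) with hkj | hjk
        · have h1 : ((k:ℕ):ℝ) ≤ ((j:ℕ):ℝ) := by exact_mod_cast hkj
          have h2 : ((j:ℕ):ℝ) < ((i:ℕ):ℝ) := by exact_mod_cast hji
          nlinarith [hlt]
        · have hik : (i:ℕ) < (k:ℕ) := hcon hjk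
          have h1 : ((i:ℕ):ℝ) + 1 ≤ ((k:ℕ):ℝ) := by
            exact_mod_cast Nat.succ_le_of_lt hik
          have h2 : ((j:ℕ):ℝ) < ((i:ℕ):ℝ) := by exact_mod_cast hji
          nlinarith [hlt]
      · rintro ⟨h1, h2⟩
        have h1' : ((j:ℕ):ℝ) + 1 ≤ ((k:ℕ):ℝ) := by
          exact_mod_cast Nat.succ_le_of_lt h1
        have h2' : ((k:ℕ):ℝ) ≤ ((i:ℕ):ℝ) := by exact_mod_cast h2
        nlinarith
  · -- wrapping case: convex quadratic
    have hij' : (i:ℕ) < (j:ℕ) := lt_of_le_of_ne hij hne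
    refine ⟨-(4*((i:ℕ):ℝ) + 4*((j:ℕ):ℝ) + 4), 4, -((2*((i:ℕ):ℝ)+1)*(2*((j:ℕ):ℝ)+1)), Or.inr (by norm_num), ?_, ?_⟩
    · intro k hc
      have hfac : (2*((k:ℕ):ℝ) - 2*((i:ℕ):ℝ) - 1) * (2*((k:ℕ):ℝ) - 2*((j:ℕ):ℝ) - 1) = 0 := by nlinarith [hc]
      rcases mul_eq_zero.mp hfac with hc' | hc'
      · exact par2 k hc'
      · exact par1 k hc'
    · ext k
      rw [mem_arcC, if_neg (not_lt.mpr hij)]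
      simp only [Set.mem_setOf_eq]
      have hIJ : ((i:ℕ):ℝ) < ((j:ℕ):ℝ) := by exact_mod_cast hij'
      constructor
      · intro hlt
        by_contra hcon
        push_neg at hcon
        obtain ⟨hki, hkj⟩ := hcon
        have hik : (i:ℕ) < (k:ℕ) := hki
        have hkj' : (k:ℕ) ≤ (j:ℕ) := hkj
        have h1 : ((i:ℕ):ℝ) + 1 ≤ ((k:ℕ):ℝ) := by
          exact_mod_cast Nat.succ_le_of_lt hik
        have h2 : ((k:ℕ):ℝ) ≤ ((j:ℕ):ℝ) := by exact_mod_cast hkj'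
        nlinarith [hlt]
      · rintro (h1 | h1)
        · have h1' : ((k:ℕ):ℝ) ≤ ((i:ℕ):ℝ) := by exact_mod_cast h1
          nlinarith
        · have h1' : ((j:ℕ):ℝ) + 1 ≤ ((k:ℕ):ℝ) := by
            exact_mod_cast Nat.succ_le_of_lt h1
          nlinarith


end CircleTight

open CircleTight in
/-- The bound `n(n-1)+2` on the number of distinct cell labels of an arrangement of
`n` circles in the plane is attained. -/
theorem labels_of_circle_arrangement_tight
    (n : ℕ) (hn : 1 ≤ n) :
    ∃ (c : Fin n → EuclideanSpace ℝ (Fin 2)) (r : Fin n → ℝ),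
      (∀ i, 0 < r i) ∧
      Set.ncard {L : Set (Fin n) | ∃ p : EuclideanSpace ℝ (Fin 2),
          p ∉ ⋃ i, Metric.sphere (c i) (r i) ∧ L = {i : Fin n | dist p (c i) < r i}}
        = n * (n - 1) + 2 := by
  classical
  haveI : NeZero n := ⟨by omega⟩
  set c : Fin n → EuclideanSpace ℝ (Fin 2) := fun i => pt ((i:ℕ):ℝ) with hc
  set r : Fin n → ℝ := fun i => Real.sqrt (1 + ((i:ℕ):ℝ)^2 + ((i:ℕ):ℝ)^4) with hr
  refine ⟨c, r, fun i => Real.sqrt_pos.mpr (by positivity), ?_⟩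
  have key : ∀ L : Set (Fin n),
      (∃ p : EuclideanSpace ℝ (Fin 2),
        p ∉ ⋃ i, Metric.sphere (c i) (r i) ∧ L = {i : Fin n | dist p (c i) < r i})
      ↔ (L = ∅ ∨ L = Set.univ ∨ ∃ j i : Fin n, i ≠ j ∧ L = arcC j i) := by
    intro L
    constructor
    · rintro ⟨p, hp, hL⟩
      have hsp : ∀ i : Fin n,
          (p 0)^2 + (p 1)^2 - 1 ≠ 2 * p 0 * ((i:ℕ):ℝ) + 2 * p 1 * ((i:ℕ):ℝ)^2 := by
        intro i hi
        exact hp (Set.mem_iUnion.mpr ⟨i,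
          Metric.mem_sphere.mpr ((dist_eq_iff p ((i:ℕ):ℝ)).mpr hi)⟩)
      have hL' : L = {k : Fin n |
          (p 0)^2 + (p 1)^2 - 1 < 2 * p 0 * ((k:ℕ):ℝ) + 2 * p 1 * ((k:ℕ):ℝ)^2} := by
        rw [hL]; ext k; exact dist_lt_iff p ((k:ℕ):ℝ)
      rcases le_or_gt (p 1) 0 with hb | hb
      · apply struct
        intro k₁ k₂ k h1 h2 hk1 hk2
        rw [hL'] at hk1 hk2 ⊢
        simp only [Set.mem_setOf_eq] at hk1 hk2 ⊢
        have c1 : ((k₁:ℕ):ℝ) ≤ ((k:ℕ):ℝ) := by exact_mod_cast Fin.le_def.mp h1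
        have c2 : ((k:ℕ):ℝ) ≤ ((k₂:ℕ):ℝ) := by exact_mod_cast Fin.le_def.mp h2
        have := concave_step (a := 2 * p 0) (b := 2 * p 1)
          (t := (p 0)^2 + (p 1)^2 - 1) (by linarith) c1 c2
          (by linarith [hk1]) (by linarith [hk2])
        linarith [this]
      · have hLc : Lᶜ = {k : Fin n |
            2 * p 0 * ((k:ℕ):ℝ) + 2 * p 1 * ((k:ℕ):ℝ)^2 < (p 0)^2 + (p 1)^2 - 1} := by
          rw [hL']
          ext k
          simp only [Set.mem_compl_iff, Set.mem_setOf_eq, not_lt]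
          constructor
          · intro hle; exact lt_of_le_of_ne hle (fun hcon => hsp k hcon.symm)
          · intro hlt; exact le_of_lt hlt
        have hconc : ∀ k₁ k₂ k : Fin n, k₁ ≤ k → k ≤ k₂ → k₁ ∈ Lᶜ → k₂ ∈ Lᶜ → k ∈ Lᶜ := by
          intro k₁ k₂ k h1 h2 hk1 hk2
          rw [hLc] at hk1 hk2 ⊢
          simp only [Set.mem_setOf_eq] at hk1 hk2 ⊢
          have c1 : ((k₁:ℕ):ℝ) ≤ ((k:ℕ):ℝ) := by exact_mod_cast Fin.le_def.mp h1
          have c2 : ((k:ℕ):ℝ) ≤ ((k₂:ℕ):ℝ) := by exact_mod_cast Fin.le_def.mp h2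
          have := concave_step (a := -(2 * p 0)) (b := -(2 * p 1))
            (t := -((p 0)^2 + (p 1)^2 - 1)) (by linarith) c1 c2
            (by nlinarith [hk1]) (by nlinarith [hk2])
          nlinarith [this]
        rcases struct hconc with h | h | ⟨j, i, hij, harc⟩
        · exact Or.inr (Or.inl (Set.compl_empty_iff.mp h))
        · exact Or.inl (Set.compl_univ_iff.mp h)
        · refine Or.inr (Or.inr ⟨i, j, hij.symm ∘ Eq.symm ∘ Eq.symm, ?_⟩)
          have : L = (arcC j i)ᶜ := by rw [← harc, compl_compl]
          rw [this, compl_arcC hij]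
    · rintro (rfl | rfl | ⟨j, i, hij, rfl⟩)
      · obtain ⟨p, hp⟩ := realize 0 (-1) 1 (Or.inr (by norm_num))
        refine ⟨p, ?_, ?_⟩
        · intro hmem
          obtain ⟨i, hi⟩ := Set.mem_iUnion.mp hmem
          have h1 := (dist_eq_iff p ((i:ℕ):ℝ)).mp (Metric.mem_sphere.mp hi)
          have h2 := (hp ((i:ℕ):ℝ)).2.mp h1
          nlinarith [sq_nonneg ((i:ℕ):ℝ)]
        · ext k
          simp only [Set.mem_empty_iff_false, Set.mem_setOf_eq, false_iff]
          intro hk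
          have h1 := (dist_lt_iff p ((k:ℕ):ℝ)).mp hk
          have h2 := (hp ((k:ℕ):ℝ)).1.mp h1
          nlinarith [sq_nonneg ((k:ℕ):ℝ)]
      · refine ⟨(0 : EuclideanSpace ℝ (Fin 2)), ?_, ?_⟩
        · intro hmem
          obtain ⟨i, hi⟩ := Set.mem_iUnion.mp hmem
          have h1 := (dist_eq_iff (0 : EuclideanSpace ℝ (Fin 2)) ((i:ℕ):ℝ)).mp
            (Metric.mem_sphere.mp hi)
          have e0 : (0 : EuclideanSpace ℝ (Fin 2)) 0 = 0 := rfl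
          have e1 : (0 : EuclideanSpace ℝ (Fin 2)) 1 = 0 := rfl
          rw [e0, e1] at h1
          nlinarith [h1]
        · ext k
          simp only [Set.mem_univ, Set.mem_setOf_eq, true_iff]
          rw [show dist (0 : EuclideanSpace ℝ (Fin 2)) (c k) < r k ↔ _ from
            dist_lt_iff (0 : EuclideanSpace ℝ (Fin 2)) ((k:ℕ):ℝ)]
          have e0 : (0 : EuclideanSpace ℝ (Fin 2)) 0 = 0 := rfl
          have e1 : (0 : EuclideanSpace ℝ (Fin 2)) 1 = 0 := rfl
          rw [e0, e1]
          norm_num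
      · obtain ⟨a, b, t, hab, hnz, hset⟩ := arc_realizable hij
        obtain ⟨p, hp⟩ := realize a b t hab
        refine ⟨p, ?_, ?_⟩
        · intro hmem
          obtain ⟨k, hk⟩ := Set.mem_iUnion.mp hmem
          have h1 := (dist_eq_iff p ((k:ℕ):ℝ)).mp (Metric.mem_sphere.mp hk)
          have h2 := (hp ((k:ℕ):ℝ)).2.mp h1
          exact hnz k h2.symm
        · rw [← hset]
          ext k
          exact ((hp ((k:ℕ):ℝ)).1.symm.trans (dist_lt_iff p ((k:ℕ):ℝ)).symm)
  have hEq : {L : Set (Fin n) | ∃ p : EuclideanSpace ℝ (Fin 2),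
      p ∉ ⋃ i, Metric.sphere (c i) (r i) ∧ L = {i : Fin n | dist p (c i) < r i}}
      = {L : Set (Fin n) | L = ∅ ∨ L = Set.univ ∨ ∃ j i : Fin n, i ≠ j ∧ L = arcC j i} :=
    Set.ext key
  rw [hEq]
  exact count hn
end
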